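/- arXiv:2605.04364 — 7 statements merged into one kernel-verified Lean document; each statement's English description precedes it below -/
import Mathlib

section
/- Let z_t ∈ ℝ^d, y_t ∈ ℝ, ỹ_t ∈ ℝ be arbitrary sequences for t = 1,…,T, let λ > 0, and set G_t := λ I + ∑_{s=1}^t z_s z_sᵀ, b_{t-1} := ∑_{s=1}^{t-1} z_s y_s, and m_t := G_t⁻¹ (b_{t-1} + z_t ỹ_t). Then for every comparator u ∈ ℝ^d, ∑_{t=1}^T (m_tᵀ z_t − y_t)² − ∑_{t=1}^T (uᵀ z_t − y_t)² ≤ λ ‖u‖² + ∑_{t=1}^T Δ_t² · z_tᵀ G_t⁻¹ z_t, where Δ_t := y_t − ỹ_t. -/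
/-!
Write `F_t(v) = λ‖v‖² + ∑_{s ≤ t} (vᵀz_s - y_s)²`. Its quadratic part is `vᵀ G_t v`, it is minimised
by the leader `w_t = G_t⁻¹ b_t`, and completing the square gives
`F_t(v) - F_t(w_t) = (v - w_t)ᵀ G_t (v - w_t)`. Since `m_t - w_t = (ỹ_t - y_t) G_t⁻¹ z_t`,
`(m_tᵀz_t - y_t)² + F_{t-1}(w_{t-1}) ≤ (m_tᵀz_t - y_t)² + F_{t-1}(m_t) = F_t(m_t)
  = F_t(w_t) + Δ_t² z_tᵀ G_t⁻¹ z_t`.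
Summing over `t` telescopes, and `F_T(w_T) ≤ F_T(u)` finishes the bound.
-/

open Matrix Finset

namespace Matrix

variable {n R : Type*} [Fintype n] [CommRing R]

theorem IsSymm.dotProduct_mulVec_comm {A : Matrix n n R} (hA : A.IsSymm) (v w : n → R) :
    v ⬝ᵥ A *ᵥ w = w ⬝ᵥ A *ᵥ v := by
  rw [dotProduct_mulVec, ← mulVec_transpose, hA.eq, dotProduct_comm]

theorem IsSymm.sub_dotProduct_mulVec_sub {A : Matrix n n R} (hA : A.IsSymm) {w b : n → R}
    (hw : A *ᵥ w = b) (v : n → R) :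
    (v - w) ⬝ᵥ A *ᵥ (v - w) = (v ⬝ᵥ A *ᵥ v - 2 * (v ⬝ᵥ b)) - (w ⬝ᵥ A *ᵥ w - 2 * (w ⬝ᵥ b)) := by
  have hwv : w ⬝ᵥ A *ᵥ v = v ⬝ᵥ b := by rw [hA.dotProduct_mulVec_comm, hw]
  simp only [mulVec_sub, sub_dotProduct, dotProduct_sub, hwv, hw]
  ring

theorem mulVec_mulVec_nonsing_inv [DecidableEq n] {A : Matrix n n R} (hA : IsUnit A) (v : n → R) :
    A *ᵥ (A⁻¹ *ᵥ v) = v := by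
  rw [mulVec_mulVec, mul_nonsing_inv _ ((isUnit_iff_isUnit_det A).mp hA), one_mulVec]

end Matrix

section Ridge

variable {ι n : Type*}

def ridgeMoment (z : ι → n → ℝ) (y : ι → ℝ) (S : Finset ι) : n → ℝ :=
  ∑ s ∈ S, y s • z s

theorem ridgeMoment_insert [DecidableEq ι] {z : ι → n → ℝ} {y : ι → ℝ} {i : ι} {S : Finset ι}
    (hi : i ∉ S) : ridgeMoment z y (insert i S) = y i • z i + ridgeMoment z y S :=
  sum_insert hi

variable [Fintype n]

def ridgeObjective (lam : ℝ) (z : ι → n → ℝ) (y : ι → ℝ) (S : Finset ι) (v : n → ℝ) : ℝ :=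
  lam * (v ⬝ᵥ v) + ∑ s ∈ S, (v ⬝ᵥ z s - y s) ^ 2

def ridgeGram [DecidableEq n] (lam : ℝ) (z : ι → n → ℝ) (S : Finset ι) : Matrix n n ℝ :=
  lam • 1 + ∑ s ∈ S, vecMulVec (z s) (z s)

noncomputable def ridgeLeader [DecidableEq n] (lam : ℝ) (z : ι → n → ℝ) (y : ι → ℝ)
    (S : Finset ι) : n → ℝ :=
  (ridgeGram lam z S)⁻¹ *ᵥ ridgeMoment z y S

variable {lam : ℝ} {z : ι → n → ℝ} {y : ι → ℝ}

theorem ridgeObjective_insert [DecidableEq ι] {i : ι} {S : Finset ι} (hi : i ∉ S) (v : n → ℝ) :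
    ridgeObjective lam z y (insert i S) v = (v ⬝ᵥ z i - y i) ^ 2 + ridgeObjective lam z y S v := by
  rw [ridgeObjective, ridgeObjective, sum_insert hi]
  ring

variable [DecidableEq n]

theorem ridgeGram_posDef (hlam : 0 < lam) (S : Finset ι) : (ridgeGram lam z S).PosDef :=
  (PosDef.one.smul hlam).add_posSemidef <| posSemidef_sum S fun s _ => by
    simpa using posSemidef_vecMulVec_self_star (z s)

theorem dotProduct_ridgeGram_mulVec (S : Finset ι) (v : n → ℝ) :
    v ⬝ᵥ ridgeGram lam z S *ᵥ v = lam * (v ⬝ᵥ v) + ∑ s ∈ S, (v ⬝ᵥ z s) ^ 2 := by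
  simp only [ridgeGram, add_mulVec, smul_mulVec, one_mulVec, sum_mulVec, vecMulVec_mulVec,
    dotProduct_add, dotProduct_smul, dotProduct_sum, smul_eq_mul, op_smul_eq_smul,
    dotProduct_comm (z _) v, sq]

theorem ridgeObjective_eq (S : Finset ι) (v : n → ℝ) :
    ridgeObjective lam z y S v =
      v ⬝ᵥ ridgeGram lam z S *ᵥ v - 2 * (v ⬝ᵥ ridgeMoment z y S) + ∑ s ∈ S, y s ^ 2 := by
  have hsq (s : ι) : (v ⬝ᵥ z s - y s) ^ 2 = (v ⬝ᵥ z s) ^ 2 - 2 * (v ⬝ᵥ y s • z s) + y s ^ 2 := by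
    rw [dotProduct_smul, smul_eq_mul]
    ring
  simp only [ridgeObjective, hsq, sum_add_distrib, sum_sub_distrib, dotProduct_ridgeGram_mulVec,
    ridgeMoment, dotProduct_sum, mul_sum]
  ring

theorem ridgeGram_mulVec_ridgeLeader (hlam : 0 < lam) (S : Finset ι) :
    ridgeGram lam z S *ᵥ ridgeLeader lam z y S = ridgeMoment z y S :=
  mulVec_mulVec_nonsing_inv (ridgeGram_posDef hlam S).isUnit _

theorem ridgeObjective_sub_ridgeLeader (hlam : 0 < lam) (S : Finset ι) (v : n → ℝ) :
    ridgeObjective lam z y S v - ridgeObjective lam z y S (ridgeLeader lam z y S) =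
      (v - ridgeLeader lam z y S) ⬝ᵥ ridgeGram lam z S *ᵥ (v - ridgeLeader lam z y S) := by
  rw [(isHermitian_iff_isSymm.mp (ridgeGram_posDef hlam S).isHermitian).sub_dotProduct_mulVec_sub
    (ridgeGram_mulVec_ridgeLeader hlam S), ridgeObjective_eq, ridgeObjective_eq]
  ring

theorem ridgeObjective_ridgeLeader_le (hlam : 0 < lam) (S : Finset ι) (v : n → ℝ) :
    ridgeObjective lam z y S (ridgeLeader lam z y S) ≤ ridgeObjective lam z y S v := by
  have hgap := (ridgeGram_posDef (z := z) hlam S).posSemidef.dotProduct_mulVec_nonneg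
    (v - ridgeLeader lam z y S)
  rw [star_trivial, ← ridgeObjective_sub_ridgeLeader hlam] at hgap
  linarith

theorem sq_sub_add_ridgeObjective_ridgeLeader_le [DecidableEq ι] (hlam : 0 < lam) {i : ι}
    {S : Finset ι} (hi : i ∉ S) (ytil : ℝ) :
    ((ridgeGram lam z (insert i S))⁻¹ *ᵥ (ridgeMoment z y S + ytil • z i) ⬝ᵥ z i - y i) ^ 2
        + ridgeObjective lam z y S (ridgeLeader lam z y S) ≤
      ridgeObjective lam z y (insert i S) (ridgeLeader lam z y (insert i S))
        + (y i - ytil) ^ 2 * (z i ⬝ᵥ (ridgeGram lam z (insert i S))⁻¹ *ᵥ z i) := by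
  set G := ridgeGram lam z (insert i S)
  set m := G⁻¹ *ᵥ (ridgeMoment z y S + ytil • z i)
  have hdiff : m - ridgeLeader lam z y (insert i S) = (ytil - y i) • G⁻¹ *ᵥ z i := by
    rw [ridgeLeader, ridgeMoment_insert hi, ← mulVec_sub, ← mulVec_smul, sub_smul]
    congr 1
    abel
  have hpenalty :
      (m - ridgeLeader lam z y (insert i S)) ⬝ᵥ G *ᵥ (m - ridgeLeader lam z y (insert i S)) =
        (y i - ytil) ^ 2 * (z i ⬝ᵥ G⁻¹ *ᵥ z i) := by
    rw [hdiff, mulVec_smul, mulVec_mulVec_nonsing_inv (ridgeGram_posDef hlam _).isUnit,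
      smul_dotProduct, dotProduct_smul, dotProduct_comm, smul_eq_mul, smul_eq_mul]
    ring
  calc (m ⬝ᵥ z i - y i) ^ 2 + ridgeObjective lam z y S (ridgeLeader lam z y S)
      ≤ (m ⬝ᵥ z i - y i) ^ 2 + ridgeObjective lam z y S m := by
        gcongr
        exact ridgeObjective_ridgeLeader_le hlam S m
    _ = ridgeObjective lam z y (insert i S) m := (ridgeObjective_insert hi m).symm
    _ = _ := by rw [← hpenalty, ← ridgeObjective_sub_ridgeLeader hlam]; ring

end Ridge

section Predictive

variable {n : Type*} [Fintype n] [DecidableEq n] (lam : ℝ) (z : ℕ → n → ℝ) (y ytil : ℕ → ℝ)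

noncomputable def polsIterate (t : ℕ) : n → ℝ :=
  (ridgeGram lam z (Icc 1 t))⁻¹ *ᵥ (ridgeMoment z y (Icc 1 (t - 1)) + ytil t • z t)

variable {lam}

theorem sum_sq_polsIterate_sub_le (hlam : 0 < lam) (N : ℕ) :
    ∑ t ∈ Icc 1 N, (polsIterate lam z y ytil t ⬝ᵥ z t - y t) ^ 2 ≤
      ridgeObjective lam z y (Icc 1 N) (ridgeLeader lam z y (Icc 1 N))
        + ∑ t ∈ Icc 1 N, (y t - ytil t) ^ 2 * (z t ⬝ᵥ (ridgeGram lam z (Icc 1 t))⁻¹ *ᵥ z t) := by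
  induction N with
  | zero =>
    simpa [ridgeObjective] using mul_nonneg hlam.le (dotProduct_self_star_nonneg _)
  | succ N ih =>
    have hnew : N + 1 ∉ Icc 1 N := by simp
    have hstep :=
      sq_sub_add_ridgeObjective_ridgeLeader_le (z := z) (y := y) hlam hnew (ytil (N + 1))
    rw [insert_Icc_right_eq_Icc_add_one (by omega)] at hstep
    rw [sum_Icc_succ_top (by omega), sum_Icc_succ_top (by omega), polsIterate, Nat.add_sub_cancel]
    linarith

end Predictive

/-- scalar predictive online least squares (POLS) regret bound.
With `G_t = λI + ∑_{s≤t} z_s z_sᵀ`, `b_{t-1} = ∑_{s<t} y_s z_s`, and the POLS iterate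
`m_t = G_t⁻¹ (b_{t-1} + ỹ_t z_t)`, for every comparator `u`,
`∑ (m_tᵀz_t − y_t)² − ∑ (uᵀz_t − y_t)² ≤ λ‖u‖² + ∑ Δ_t² z_tᵀ G_t⁻¹ z_t`,
where `Δ_t = y_t − ỹ_t`. -/
theorem scalar_pols_regret
    (d T : ℕ) (lam : ℝ) (hlam : 0 < lam)
    (z : ℕ → Fin d → ℝ) (y ytil : ℕ → ℝ)
    (G : ℕ → Matrix (Fin d) (Fin d) ℝ)
    (hG : ∀ t, G t = lam • (1 : Matrix (Fin d) (Fin d) ℝ) +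
      ∑ s ∈ Finset.Icc 1 t, Matrix.vecMulVec (z s) (z s))
    (b : ℕ → Fin d → ℝ)
    (hb : ∀ t, b t = ∑ s ∈ Finset.Icc 1 t, y s • z s)
    (m : ℕ → Fin d → ℝ)
    (hm : ∀ t, m t = (G t)⁻¹.mulVec (b (t - 1) + ytil t • z t))
    (u : Fin d → ℝ) :
    ∑ t ∈ Finset.Icc 1 T, (dotProduct (m t) (z t) - y t) ^ 2
      - ∑ t ∈ Finset.Icc 1 T, (dotProduct u (z t) - y t) ^ 2
    ≤ lam * dotProduct u u
      + ∑ t ∈ Finset.Icc 1 T,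
          (y t - ytil t) ^ 2 * dotProduct (z t) ((G t)⁻¹.mulVec (z t)) := by
  obtain rfl : G = fun t => ridgeGram lam z (Icc 1 t) := funext hG
  obtain rfl : b = fun t => ridgeMoment z y (Icc 1 t) := funext hb
  obtain rfl : m = polsIterate lam z y ytil := funext hm
  have hpredict := sum_sq_polsIterate_sub_le z y ytil hlam T
  have hleader := ridgeObjective_ridgeLeader_le (z := z) (y := y) hlam (Icc 1 T) u
  simp only [ridgeObjective] at hpredict hleader
  linarith
end

section
/- Let z_t ∈ ℝ^d, y_t ∈ ℝ^p, ỹ_t ∈ ℝ^p be arbitrary sequences for t = 1,…,T and let λ > 0. Let M_t^{pols} := (B_{t-1} + ỹ_t z_tᵀ) G_t⁻¹ be the POLS iterate. Then for every comparator matrix M ∈ ℝ^{p×d}, ∑_{t=1}^T ‖M_t^{pols} z_t − y_t‖² − ∑_{t=1}^T ‖M z_t − y_t‖² ≤ λ ‖M‖_F² + (max_{1≤t≤T} ‖y_t − ỹ_t‖²) · d · log(1 + (∑_{t=1}^T ‖z_t‖²)/(λ d)). -/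
/-!
Let `F_t(A) = λ‖A‖_F² + ∑_{s ≤ t} ‖A z_s - y_s‖²`. It is a quadratic with Hessian `G_t`,
minimised by the leader `N_t = B_t G_t⁻¹`, and `F_t(A) = F_t(N_t) + tr((A - N_t) G_t (A - N_t)ᵀ)`.
The POLS iterate differs from the leader by `(ỹ_t - y_t) z_tᵀ G_t⁻¹`, so its loss at step `t` is
`F_t(M_t) - F_{t-1}(M_t) ≤ F_t(N_t) - F_{t-1}(N_{t-1}) + ‖y_t - ỹ_t‖² z_tᵀ G_t⁻¹ z_t`.
Telescoping and `F_T(N_T) ≤ F_T(M)` leave `∑_t ‖y_t - ỹ_t‖² z_tᵀ G_t⁻¹ z_t` beyond `λ‖M‖_F²`.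
The matrix determinant lemma gives `det G_{t-1} = det G_t (1 - z_tᵀ G_t⁻¹ z_t)`, hence
`z_tᵀ G_t⁻¹ z_t ≤ log det G_t - log det G_{t-1}`, and AM–GM on the eigenvalues of `G_T` bounds
`log det G_T - log det G_0` by `d log(1 + ∑‖z_t‖²/(λd))`.
-/

open Matrix Finset

lemma sum_Icc_le_sub_of_le_sub {a b : ℕ → ℝ} (h : ∀ k, a (k + 1) ≤ b (k + 1) - b k) (T : ℕ) :
    ∑ t ∈ Icc 1 T, a t ≤ b T - b 0 := by
  induction T with
  | zero => simp
  | succ T ih => rw [sum_Icc_succ_top (by omega)]; linarith [h T]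

section TraceForms
variable {m n : Type*} [Fintype m] [Fintype n]

lemma trace_mul_transpose_self (M : Matrix m n ℝ) :
    trace (M * Mᵀ) = ∑ i, ∑ j, M i j ^ 2 := by
  simp [trace, mul_apply, sq]

lemma mulVec_sub_dotProduct_self (A : Matrix m n ℝ) (v : n → ℝ) (w : m → ℝ) :
    (A *ᵥ v - w) ⬝ᵥ (A *ᵥ v - w)
      = trace (A * vecMulVec v v * Aᵀ) - 2 * trace (vecMulVec w v * Aᵀ) + w ⬝ᵥ w := by
  rw [mul_vecMulVec, vecMulVec_mul, vecMulVec_mul, trace_vecMulVec, trace_vecMulVec,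
    vecMul_transpose]
  simp only [sub_dotProduct, dotProduct_sub, dotProduct_comm w]
  ring

lemma trace_vecMulVec_mul_mul_transpose (u : m → ℝ) (v : n → ℝ) (P : Matrix n n ℝ) :
    trace (vecMulVec u v * P * (vecMulVec u v)ᵀ) = (u ⬝ᵥ u) * (v ⬝ᵥ P *ᵥ v) := by
  rw [transpose_vecMulVec, vecMulVec_mul, vecMulVec_mul_vecMulVec, trace_vecMulVec,
    dotProduct_smul, smul_eq_mul, dotProduct_mulVec, mul_comm]

lemma trace_mul_mul_transpose_nonneg {G : Matrix n n ℝ} (hG : G.PosSemidef) (X : Matrix m n ℝ) :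
    0 ≤ trace (X * G * Xᵀ) := by
  simpa using (hG.mul_mul_conjTranspose_same X).trace_nonneg

lemma trace_mul_mul_transpose_complete_square {G : Matrix n n ℝ} (hG : Gᵀ = G)
    {N B : Matrix m n ℝ} (hN : N * G = B) (A : Matrix m n ℝ) :
    trace (A * G * Aᵀ) - 2 * trace (B * Aᵀ)
      = trace ((A - N) * G * (A - N)ᵀ) + (trace (N * G * Nᵀ) - 2 * trace (B * Nᵀ)) := by
  have hcross : trace (A * G * Nᵀ) = trace (N * G * Aᵀ) := by
    rw [← trace_transpose, transpose_mul, transpose_mul, transpose_transpose, hG,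
      Matrix.mul_assoc]
  subst hN
  simp only [transpose_sub, Matrix.sub_mul, Matrix.mul_sub, trace_sub, hcross]
  ring

end TraceForms

section LogDet
variable {n : Type*} [Fintype n] [DecidableEq n]

lemma det_add_vecMulVec {A : Matrix n n ℝ} (hA : IsUnit A.det) (u v : n → ℝ) :
    (A + vecMulVec u v).det = A.det * (1 + v ⬝ᵥ A⁻¹ *ᵥ u) := by
  rw [vecMulVec_eq Unit, det_add_replicateCol_mul_replicateRow hA, det_unique (n := Unit)]
  congr 1
  simp [mul_apply, mulVec, dotProduct, Finset.mul_sum, Finset.sum_mul, mul_assoc]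
  exact Finset.sum_comm

lemma dotProduct_inv_mulVec_le_log_det_sub {A : Matrix n n ℝ} (hA : A.PosDef) (v : n → ℝ) :
    v ⬝ᵥ (A + vecMulVec v v)⁻¹ *ᵥ v ≤ Real.log (A + vecMulVec v v).det - Real.log A.det := by
  have hA' : (A + vecMulVec v v).PosDef :=
    hA.add_posSemidef (by simpa using posSemidef_vecMulVec_self_star v)
  have hdet : A.det = (A + vecMulVec v v).det * (1 - v ⬝ᵥ (A + vecMulVec v v)⁻¹ *ᵥ v) := by
    have h := det_add_vecMulVec hA'.det_pos.ne'.isUnit (-v) v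
    rwa [mulVec_neg, dotProduct_neg, ← sub_eq_add_neg, neg_vecMulVec, add_neg_cancel_right] at h
  set c := v ⬝ᵥ (A + vecMulVec v v)⁻¹ *ᵥ v
  have hc : 0 < 1 - c := pos_of_mul_pos_right (hdet ▸ hA.det_pos) hA'.det_pos.le
  rw [hdet, Real.log_mul hA'.det_pos.ne' hc.ne']
  linarith [Real.log_le_sub_one_of_pos hc]

lemma log_det_le_card_mul_log_trace_div {A : Matrix n n ℝ} (hA : A.PosDef) :
    Real.log A.det ≤ Fintype.card n * Real.log (A.trace / Fintype.card n) := by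
  rcases isEmpty_or_nonempty n with hn | hn
  · simp
  have hcard : (0 : ℝ) < Fintype.card n := by exact_mod_cast Fintype.card_pos
  set ev := hA.isHermitian.eigenvalues
  have hjensen := strictConcaveOn_log_Ioi.concaveOn.le_map_sum (t := univ)
    (w := fun _ => (Fintype.card n : ℝ)⁻¹) (p := ev) (fun _ _ => by positivity)
    (by simp [hcard.ne']) (fun i _ => hA.eigenvalues_pos i)
  have hdet : A.det = ∏ i, ev i := by simpa using hA.isHermitian.det_eq_prod_eigenvalues
  have htr : A.trace = ∑ i, ev i := by simpa using hA.isHermitian.trace_eq_sum_eigenvalues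
  rw [hdet, htr, Real.log_prod (fun i _ => (hA.eigenvalues_pos i).ne')]
  simp only [smul_eq_mul, ← mul_sum] at hjensen
  rw [inv_mul_eq_div, div_le_iff₀ hcard, inv_mul_eq_div] at hjensen
  linarith

end LogDet

namespace Pols

variable {m n : Type*} (lam : ℝ) (z : ℕ → n → ℝ) (y ytil : ℕ → m → ℝ)

def cross (t : ℕ) : Matrix m n ℝ :=
  ∑ s ∈ Icc 1 t, vecMulVec (y s) (z s)

noncomputable def gram [DecidableEq n] (t : ℕ) : Matrix n n ℝ :=
  lam • 1 + ∑ s ∈ Icc 1 t, vecMulVec (z s) (z s)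

noncomputable def regLoss [Fintype m] [Fintype n] (t : ℕ) (A : Matrix m n ℝ) : ℝ :=
  lam * trace (A * Aᵀ) + ∑ s ∈ Icc 1 t, (A *ᵥ z s - y s) ⬝ᵥ (A *ᵥ z s - y s)

noncomputable def leader [Fintype n] [DecidableEq n] (t : ℕ) : Matrix m n ℝ :=
  cross z y t * (gram lam z t)⁻¹

noncomputable def iterate [Fintype n] [DecidableEq n] (t : ℕ) : Matrix m n ℝ :=
  (cross z y (t - 1) + vecMulVec (ytil t) (z t)) * (gram lam z t)⁻¹

variable {lam z y ytil}

lemma cross_succ (t : ℕ) : cross z y (t + 1) = cross z y t + vecMulVec (y (t + 1)) (z (t + 1)) :=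
  sum_Icc_succ_top (by omega) _

lemma gram_succ [DecidableEq n] (t : ℕ) :
    gram lam z (t + 1) = gram lam z t + vecMulVec (z (t + 1)) (z (t + 1)) := by
  rw [gram, gram, sum_Icc_succ_top (by omega), add_assoc]

lemma transpose_gram [DecidableEq n] (t : ℕ) : (gram lam z t)ᵀ = gram lam z t := by
  simp [gram, transpose_sum, transpose_vecMulVec]

lemma regLoss_succ [Fintype m] [Fintype n] (t : ℕ) (A : Matrix m n ℝ) :
    regLoss lam z y (t + 1) A
      = regLoss lam z y t A + (A *ᵥ z (t + 1) - y (t + 1)) ⬝ᵥ (A *ᵥ z (t + 1) - y (t + 1)) := by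
  rw [regLoss, regLoss, sum_Icc_succ_top (by omega), add_assoc]

variable [Fintype m] [Fintype n] [DecidableEq n]

lemma posDef_gram (hlam : 0 < lam) (t : ℕ) : (gram lam z t).PosDef :=
  (PosDef.one.smul hlam).add_posSemidef
    (posSemidef_sum _ fun s _ => by simpa using posSemidef_vecMulVec_self_star (z s))

lemma regLoss_eq (t : ℕ) (A : Matrix m n ℝ) :
    regLoss lam z y t A = trace (A * gram lam z t * Aᵀ) - 2 * trace (cross z y t * Aᵀ)
      + ∑ s ∈ Icc 1 t, y s ⬝ᵥ y s := by
  simp only [regLoss, gram, cross, mulVec_sub_dotProduct_self, Matrix.mul_add, Matrix.add_mul,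
    Matrix.mul_sum, Matrix.sum_mul, trace_add, trace_sum, sum_add_distrib, sum_sub_distrib,
    mul_sum, Matrix.mul_smul, Matrix.smul_mul, Matrix.mul_one, trace_smul, smul_eq_mul]
  ring

lemma regLoss_eq_leader_add (hlam : 0 < lam) (t : ℕ) (A : Matrix m n ℝ) :
    regLoss lam z y t A = regLoss lam z y t (leader lam z y t)
      + trace ((A - leader lam z y t) * gram lam z t * (A - leader lam z y t)ᵀ) := by
  have hN : leader lam z y t * gram lam z t = cross z y t := by
    rw [leader, Matrix.mul_assoc, nonsing_inv_mul _ (posDef_gram hlam t).det_pos.ne'.isUnit,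
      Matrix.mul_one]
  rw [regLoss_eq, regLoss_eq, trace_mul_mul_transpose_complete_square (transpose_gram t) hN]
  ring

lemma regLoss_leader_le (hlam : 0 < lam) (t : ℕ) (A : Matrix m n ℝ) :
    regLoss lam z y t (leader lam z y t) ≤ regLoss lam z y t A := by
  rw [regLoss_eq_leader_add hlam t A, le_add_iff_nonneg_right]
  exact trace_mul_mul_transpose_nonneg (posDef_gram hlam t).posSemidef _

lemma regLoss_leader_zero : regLoss lam z y 0 (leader lam z y 0) = 0 := by
  simp [regLoss, leader, cross]

lemma regLoss_iterate (hlam : 0 < lam) (t : ℕ) :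
    regLoss lam z y (t + 1) (iterate lam z y ytil (t + 1))
      = regLoss lam z y (t + 1) (leader lam z y (t + 1))
        + (y (t + 1) - ytil (t + 1)) ⬝ᵥ (y (t + 1) - ytil (t + 1))
          * (z (t + 1) ⬝ᵥ (gram lam z (t + 1))⁻¹ *ᵥ z (t + 1)) := by
  set G := gram lam z (t + 1)
  set V := vecMulVec (ytil (t + 1) - y (t + 1)) (z (t + 1))
  have hdiff : iterate lam z y ytil (t + 1) - leader lam z y (t + 1) = V * G⁻¹ := by
    rw [iterate, leader, cross_succ, Nat.add_sub_cancel, ← Matrix.sub_mul,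
      add_sub_add_left_eq_sub, ← sub_vecMulVec]
  have hquad : V * G⁻¹ * G * (V * G⁻¹)ᵀ = V * G⁻¹ * Vᵀ := by
    rw [Matrix.mul_assoc V, nonsing_inv_mul _ (posDef_gram hlam _).det_pos.ne'.isUnit,
      Matrix.mul_one, transpose_mul, transpose_nonsing_inv, transpose_gram, Matrix.mul_assoc]
  rw [regLoss_eq_leader_add hlam _ (iterate lam z y ytil (t + 1)), hdiff, hquad,
    trace_vecMulVec_mul_mul_transpose, ← neg_sub, neg_dotProduct_neg]

theorem regret_le_sum_hint_error (hlam : 0 < lam) (T : ℕ) (M : Matrix m n ℝ) :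
    ∑ t ∈ Icc 1 T, (iterate lam z y ytil t *ᵥ z t - y t) ⬝ᵥ (iterate lam z y ytil t *ᵥ z t - y t)
        - ∑ t ∈ Icc 1 T, (M *ᵥ z t - y t) ⬝ᵥ (M *ᵥ z t - y t)
      ≤ lam * trace (M * Mᵀ) + ∑ t ∈ Icc 1 T,
          (y t - ytil t) ⬝ᵥ (y t - ytil t) * (z t ⬝ᵥ (gram lam z t)⁻¹ *ᵥ z t) := by
  set x := iterate lam z y ytil
  set φ := fun t => regLoss lam z y t (leader lam z y t)
  have hstep : ∀ k, (x (k + 1) *ᵥ z (k + 1) - y (k + 1)) ⬝ᵥ (x (k + 1) *ᵥ z (k + 1) - y (k + 1))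
      - (y (k + 1) - ytil (k + 1)) ⬝ᵥ (y (k + 1) - ytil (k + 1))
        * (z (k + 1) ⬝ᵥ (gram lam z (k + 1))⁻¹ *ᵥ z (k + 1)) ≤ φ (k + 1) - φ k := by
    intro k
    have hsucc := regLoss_succ (lam := lam) (z := z) (y := y) k (x (k + 1))
    have hiter := regLoss_iterate (z := z) (y := y) (ytil := ytil) hlam k
    have hleader := regLoss_leader_le (z := z) (y := y) hlam k (x (k + 1))
    simp only [φ]
    linarith
  have htele := sum_Icc_le_sub_of_le_sub (b := φ) (a := fun t =>
    (x t *ᵥ z t - y t) ⬝ᵥ (x t *ᵥ z t - y t)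
      - (y t - ytil t) ⬝ᵥ (y t - ytil t) * (z t ⬝ᵥ (gram lam z t)⁻¹ *ᵥ z t)) hstep T
  have hcomp : φ T ≤ lam * trace (M * Mᵀ) + ∑ t ∈ Icc 1 T, (M *ᵥ z t - y t) ⬝ᵥ (M *ᵥ z t - y t) :=
    regLoss_leader_le hlam T M
  rw [sum_sub_distrib] at htele
  simp only [φ, regLoss_leader_zero] at htele
  linarith

theorem sum_dotProduct_inv_gram_le (hlam : 0 < lam) (T : ℕ) :
    ∑ t ∈ Icc 1 T, z t ⬝ᵥ (gram lam z t)⁻¹ *ᵥ z t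
      ≤ Real.log (gram lam z T).det - Real.log (gram lam z 0).det :=
  sum_Icc_le_sub_of_le_sub (a := fun t => z t ⬝ᵥ (gram lam z t)⁻¹ *ᵥ z t)
    (b := fun t => Real.log (gram lam z t).det) (fun k => by
      rw [gram_succ]; exact dotProduct_inv_mulVec_le_log_det_sub (posDef_gram hlam k) _) T

theorem log_det_gram_sub_le (hlam : 0 < lam) (T : ℕ) :
    Real.log (gram lam z T).det - Real.log (gram lam z 0).det
      ≤ Fintype.card n * Real.log (1 + (∑ t ∈ Icc 1 T, z t ⬝ᵥ z t) / (lam * Fintype.card n)) := by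
  set S := ∑ t ∈ Icc 1 T, z t ⬝ᵥ z t
  have hS : 0 ≤ S := sum_nonneg fun t _ => by simpa using dotProduct_self_star_nonneg (z t)
  have htrace : trace (gram lam z T) = lam * Fintype.card n + S := by
    simp [gram, trace_sum, S]
  have hdet0 : (gram lam z 0).det = lam ^ Fintype.card n := by simp [gram]
  have hle := log_det_le_card_mul_log_trace_div (posDef_gram (z := z) hlam T)
  rw [htrace] at hle
  rw [hdet0, Real.log_pow]
  rcases (Fintype.card n).eq_zero_or_pos with hcard | hcard
  · simp_all
  · have hcard' : (0 : ℝ) < Fintype.card n := by exact_mod_cast hcard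
    have hsplit : (lam * Fintype.card n + S) / Fintype.card n
        = lam * (1 + S / (lam * Fintype.card n)) := by field_simp
    rw [hsplit, Real.log_mul hlam.ne' (by positivity)] at hle
    linarith

end Pols

/-- matrix POLS regret bound.  With `G_t = λI + ∑_{s≤t} z_s z_sᵀ`,
`B_{t-1} = ∑_{s<t} y_s z_sᵀ`, and POLS iterate `M_t = (B_{t-1} + ỹ_t z_tᵀ) G_t⁻¹`,
for every comparator `M`,
`∑‖M_t z_t − y_t‖² − ∑‖M z_t − y_t‖²
   ≤ λ‖M‖_F² + (max_t ‖y_t − ỹ_t‖²) · d · log(1 + ∑‖z_t‖²/(λd))`.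
Squared Euclidean norms are written as dot products of a vector with itself, and
`‖M‖_F² = ∑ᵢⱼ M i j ^ 2`. -/
theorem matrix_pols_regret
    (d p T : ℕ) (hT : 1 ≤ T) (lam : ℝ) (hlam : 0 < lam)
    (z : ℕ → Fin d → ℝ) (y ytil : ℕ → Fin p → ℝ)
    (G : ℕ → Matrix (Fin d) (Fin d) ℝ)
    (hG : ∀ t, G t = lam • (1 : Matrix (Fin d) (Fin d) ℝ) +
      ∑ s ∈ Finset.Icc 1 t, Matrix.vecMulVec (z s) (z s))
    (B : ℕ → Matrix (Fin p) (Fin d) ℝ)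
    (hB : ∀ t, B t = ∑ s ∈ Finset.Icc 1 t, Matrix.vecMulVec (y s) (z s))
    (Mpols : ℕ → Matrix (Fin p) (Fin d) ℝ)
    (hM : ∀ t, Mpols t = (B (t - 1) + Matrix.vecMulVec (ytil t) (z t)) * (G t)⁻¹)
    (M : Matrix (Fin p) (Fin d) ℝ) :
    ∑ t ∈ Finset.Icc 1 T,
        dotProduct ((Mpols t).mulVec (z t) - y t) ((Mpols t).mulVec (z t) - y t)
      - ∑ t ∈ Finset.Icc 1 T,
        dotProduct (M.mulVec (z t) - y t) (M.mulVec (z t) - y t)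
    ≤ lam * (∑ i, ∑ j, (M i j) ^ 2)
      + ((Finset.Icc 1 T).sup' (Finset.nonempty_Icc.mpr hT)
            (fun t => dotProduct (y t - ytil t) (y t - ytil t)))
        * d * Real.log (1 + (∑ t ∈ Finset.Icc 1 T, dotProduct (z t) (z t)) / (lam * d)) := by
  obtain rfl : G = Pols.gram lam z := funext hG
  obtain rfl : B = Pols.cross z y := funext hB
  obtain rfl : Mpols = Pols.iterate lam z y ytil := funext hM
  set R := (Icc 1 T).sup' (nonempty_Icc.mpr hT) fun t => (y t - ytil t) ⬝ᵥ (y t - ytil t)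
  have hR : 0 ≤ R := by
    refine le_trans ?_ (le_sup' _ (left_mem_Icc.mpr hT))
    simpa using dotProduct_self_star_nonneg (y 1 - ytil 1)
  have hhint : ∑ t ∈ Icc 1 T, (y t - ytil t) ⬝ᵥ (y t - ytil t)
        * (z t ⬝ᵥ (Pols.gram lam z t)⁻¹ *ᵥ z t)
      ≤ R * ∑ t ∈ Icc 1 T, z t ⬝ᵥ (Pols.gram lam z t)⁻¹ *ᵥ z t := by
    rw [mul_sum]
    refine sum_le_sum fun t ht => mul_le_mul_of_nonneg_right
      (le_sup' (fun t => (y t - ytil t) ⬝ᵥ (y t - ytil t)) ht) ?_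
    simpa using (Pols.posDef_gram hlam t).inv.posSemidef.dotProduct_mulVec_nonneg (z t)
  have hpot := (Pols.sum_dotProduct_inv_gram_le (z := z) hlam T).trans
    (Pols.log_det_gram_sub_le hlam T)
  rw [Fintype.card_fin] at hpot
  have hregret := Pols.regret_le_sum_hint_error (z := z) (y := y) (ytil := ytil) hlam T M
  rw [trace_mul_transpose_self] at hregret
  linarith [mul_le_mul_of_nonneg_left hpot hR]
end

section
/- Let z_t ∈ ℝ^d for t = 1,…,T, let λ > 0, and define G_0 := λ I and G_t := G_{t-1} + z_t z_tᵀ. Then ∑_{t=1}^T z_tᵀ G_t⁻¹ z_t ≤ log(det G_T / det G_0) ≤ d · log(1 + (∑_{t=1}^T ‖z_t‖²)/(λ d)). -/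
/-!
Write `s_t = z_tᵀ G_{t-1}⁻¹ z_t ≥ 0`. The matrix determinant lemma gives
`det G_t = (1 + s_t) det G_{t-1}`, and Sherman–Morrison gives
`z_tᵀ G_t⁻¹ z_t = s_t / (1 + s_t) ≤ log (1 + s_t)`, so the sum telescopes to at most
`log (det G_T / det G_0)`. For the second inequality, AM–GM on the eigenvalues of `G_T` gives
`det G_T ≤ (tr G_T / d) ^ d`, while `tr G_T = λ d + ∑ ‖z_t‖²` and `det G_0 = λ ^ d`.
-/

open Matrix Finset

theorem Real.prod_le_sum_div_card_pow {ι : Type*} (s : Finset ι) {f : ι → ℝ}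
    (hf : ∀ i ∈ s, 0 ≤ f i) : ∏ i ∈ s, f i ≤ ((∑ i ∈ s, f i) / #s) ^ #s := by
  rcases s.eq_empty_or_nonempty with rfl | hs
  · simp
  have hgm := Real.geom_mean_le_arith_mean s (fun _ ↦ 1) f (fun _ _ ↦ zero_le_one)
    (by simpa using hs) hf
  simp only [Real.rpow_one, one_mul, sum_const, nsmul_eq_mul, mul_one] at hgm
  calc ∏ i ∈ s, f i = ((∏ i ∈ s, f i) ^ ((#s : ℝ)⁻¹)) ^ #s :=
        (Real.rpow_inv_natCast_pow (prod_nonneg hf) hs.card_pos.ne').symm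
    _ ≤ _ := pow_le_pow_left₀ (Real.rpow_nonneg (prod_nonneg hf) _) hgm _

namespace Matrix

section

variable {n : Type*} [Fintype n]

theorem PosDef.add_vecMulVec_self {A : Matrix n n ℝ} (hA : A.PosDef) (v : n → ℝ) :
    (A + vecMulVec v v).PosDef :=
  hA.add_posSemidef (posSemidef_vecMulVec_self_star v)

variable [DecidableEq n]

theorem PosSemidef.det_le_trace_div_card_pow {A : Matrix n n ℝ} (hA : A.PosSemidef) :
    A.det ≤ (A.trace / Fintype.card n) ^ Fintype.card n := by
  rw [hA.isHermitian.det_eq_prod_eigenvalues, hA.isHermitian.trace_eq_sum_eigenvalues]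
  exact Real.prod_le_sum_div_card_pow univ fun i _ ↦ hA.eigenvalues_nonneg i

theorem det_add_vecMulVec {α : Type*} [CommRing α] {A : Matrix n n α} (hA : IsUnit A.det)
    (u v : n → α) : (A + vecMulVec u v).det = A.det * (1 + v ⬝ᵥ A⁻¹ *ᵥ u) := by
  rw [vecMulVec_eq Unit, det_add_mul _ _ hA, det_unique (1 + _), add_apply, one_apply_eq,
    Matrix.mul_assoc, ← replicateCol_mulVec, replicateRow_mul_replicateCol_apply]

theorem inv_add_vecMulVec_mulVec {K : Type*} [Field K] {A : Matrix n n K} (hA : IsUnit A.det)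
    {u v : n → K} (h : 1 + v ⬝ᵥ A⁻¹ *ᵥ u ≠ 0) :
    (A + vecMulVec u v)⁻¹ *ᵥ u = (1 + v ⬝ᵥ A⁻¹ *ᵥ u)⁻¹ • A⁻¹ *ᵥ u := by
  have hB : IsUnit (A + vecMulVec u v).det := by
    rw [det_add_vecMulVec hA]; exact hA.mul (isUnit_iff_ne_zero.mpr h)
  have hmul : (A + vecMulVec u v) *ᵥ A⁻¹ *ᵥ u = (1 + v ⬝ᵥ A⁻¹ *ᵥ u) • u := by
    rw [add_mulVec, mulVec_mulVec, mul_nonsing_inv _ hA, one_mulVec, vecMulVec_mulVec,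
      op_smul_eq_smul, add_smul, one_smul]
  rw [← inv_smul_smul₀ h ((A + vecMulVec u v)⁻¹ *ᵥ u), ← mulVec_smul, ← hmul, mulVec_mulVec,
    nonsing_inv_mul _ hB, one_mulVec]

theorem PosDef.dotProduct_inv_add_vecMulVec_self_le_log_det_div {A : Matrix n n ℝ}
    (hA : A.PosDef) (v : n → ℝ) :
    v ⬝ᵥ (A + vecMulVec v v)⁻¹ *ᵥ v ≤ Real.log ((A + vecMulVec v v).det / A.det) := by
  set s := v ⬝ᵥ A⁻¹ *ᵥ v
  have hs : 0 < 1 + s := by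
    have : 0 ≤ s := by simpa using hA.inv.posSemidef.dotProduct_mulVec_nonneg v
    linarith
  have hA' : IsUnit A.det := isUnit_iff_ne_zero.mpr hA.det_pos.ne'
  rw [inv_add_vecMulVec_mulVec hA' hs.ne', dotProduct_smul, det_add_vecMulVec hA',
    mul_div_cancel_left₀ _ hA.det_pos.ne', smul_eq_mul]
  calc (1 + s)⁻¹ * s = 1 - (1 + s)⁻¹ := by field_simp; ring
    _ ≤ Real.log (1 + s) := Real.one_sub_inv_le_log_of_pos hs

theorem PosDef.log_det_div_pow_card_le {A : Matrix n n ℝ} (hA : A.PosDef) {c : ℝ} (hc : 0 < c) :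
    Real.log (A.det / c ^ Fintype.card n)
      ≤ Fintype.card n * Real.log (A.trace / (c * Fintype.card n)) := by
  rw [← Real.log_pow, mul_comm c, ← div_div, div_pow]
  gcongr
  · exact div_pos hA.det_pos (by positivity)
  · exact hA.posSemidef.det_le_trace_div_card_pow

end

def IsRankOneUpdateSeq {n R : Type*} [Semiring R] (G : ℕ → Matrix n n R) (z : ℕ → n → R) :
    Prop :=
  ∀ t, G (t + 1) = G t + vecMulVec (z (t + 1)) (z (t + 1))

namespace IsRankOneUpdateSeq

variable {n : Type*} [Fintype n]

theorem trace_eq {R : Type*} [Semiring R] {G : ℕ → Matrix n n R} {z : ℕ → n → R}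
    (hG : IsRankOneUpdateSeq G z) (T : ℕ) :
    (G T).trace = (G 0).trace + ∑ t ∈ Icc 1 T, z t ⬝ᵥ z t := by
  induction T with
  | zero => simp
  | succ T ih =>
    rw [sum_Icc_succ_top (by omega), hG, trace_add, trace_vecMulVec, ih, add_assoc]

variable {G : ℕ → Matrix n n ℝ} {z : ℕ → n → ℝ}

theorem posDef (hG : IsRankOneUpdateSeq G z) (h0 : (G 0).PosDef) : ∀ t, (G t).PosDef
  | 0 => h0
  | t + 1 => hG t ▸ (hG.posDef h0 t).add_vecMulVec_self _

theorem sum_dotProduct_inv_mulVec_le_log_det_div [DecidableEq n]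
    (hG : IsRankOneUpdateSeq G z) (h0 : (G 0).PosDef) (T : ℕ) :
    ∑ t ∈ Icc 1 T, z t ⬝ᵥ (G t)⁻¹ *ᵥ z t ≤ Real.log ((G T).det / (G 0).det) := by
  have hdet t : 0 < (G t).det := (hG.posDef h0 t).det_pos
  induction T with
  | zero => simp
  | succ T ih =>
    have hstep := (hG.posDef h0 T).dotProduct_inv_add_vecMulVec_self_le_log_det_div (z (T + 1))
    rw [← hG] at hstep
    calc ∑ t ∈ Icc 1 (T + 1), z t ⬝ᵥ (G t)⁻¹ *ᵥ z t
        ≤ Real.log ((G T).det / (G 0).det) + Real.log ((G (T + 1)).det / (G T).det) := by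
          rw [sum_Icc_succ_top (by omega)]
          gcongr
      _ = Real.log ((G (T + 1)).det / (G 0).det) := by
          rw [← Real.log_mul (div_pos (hdet T) (hdet 0)).ne' (div_pos (hdet _) (hdet T)).ne',
            div_mul_div_cancel₀' (hdet T).ne']

end IsRankOneUpdateSeq

end Matrix

/-- the elliptical potential lemma.  With `G_0 = λI` and
`G_t = G_{t-1} + z_t z_tᵀ`,
`∑_{t=1}^T z_tᵀ G_t⁻¹ z_t ≤ log(det G_T / det G_0) ≤ d log(1 + ∑‖z_t‖²/(λd))`. -/
theorem elliptical_potential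
    (d T : ℕ) (lam : ℝ) (hlam : 0 < lam)
    (z : ℕ → Fin d → ℝ)
    (G : ℕ → Matrix (Fin d) (Fin d) ℝ)
    (hG0 : G 0 = lam • (1 : Matrix (Fin d) (Fin d) ℝ))
    (hGsucc : ∀ t : ℕ, 1 ≤ t → G t = G (t - 1) + Matrix.vecMulVec (z t) (z t)) :
    (∑ t ∈ Finset.Icc 1 T, dotProduct (z t) ((G t)⁻¹.mulVec (z t))
        ≤ Real.log ((G T).det / (G 0).det)) ∧
    Real.log ((G T).det / (G 0).det)
        ≤ d * Real.log (1 + (∑ t ∈ Finset.Icc 1 T, dotProduct (z t) (z t)) / (lam * d)) := by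
  have hG : IsRankOneUpdateSeq G z := fun t ↦ hGsucc (t + 1) (Nat.le_add_left 1 t)
  have h0 : (G 0).PosDef := hG0 ▸ PosDef.one.smul hlam
  refine ⟨hG.sum_dotProduct_inv_mulVec_le_log_det_div h0 T, ?_⟩
  calc Real.log ((G T).det / (G 0).det)
      = Real.log ((G T).det / lam ^ Fintype.card (Fin d)) := by
        rw [hG0, det_smul, det_one, mul_one]
    _ ≤ Fintype.card (Fin d) * Real.log ((G T).trace / (lam * Fintype.card (Fin d))) :=
        (hG.posDef h0 T).log_det_div_pow_card_le hlam
    _ = d * Real.log (1 + (∑ t ∈ Icc 1 T, z t ⬝ᵥ z t) / (lam * d)) := by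
        rw [hG.trace_eq, hG0, trace_smul, trace_one, Fintype.card_fin, smul_eq_mul]
        rcases eq_or_ne d 0 with rfl | hd
        · simp
        · rw [add_div, mul_comm lam, div_self (by positivity)]
end

section
/- Let z_s ∈ ℝ^d, y_s ∈ ℝ^p for s = 1,…,t, let λ > 0, and set G_t := λ I + ∑_{s=1}^t z_s z_sᵀ, G_{t-1} := λ I + ∑_{s=1}^{t-1} z_s z_sᵀ, and B_{t-1} := ∑_{s=1}^{t-1} y_s z_sᵀ. Then M := B_{t-1} G_{t-1}⁻¹ is the unique matrix in ℝ^{p×d} satisfying the fixed-point equation M = (B_{t-1} + (M z_t) z_tᵀ) G_t⁻¹. Consequently, setting the self-consistent hint ỹ_t := M_t^{pols} z_t in the POLS iterate M_t^{pols} := (B_{t-1} + ỹ_t z_tᵀ) G_t⁻¹ recovers the standard regularized online least squares iterate M_t^{ols} := B_{t-1} G_{t-1}⁻¹. -/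
open Matrix

/-!
Since `G_t = G_{t-1} + z_t z_tᵀ` and `(M z_t) z_tᵀ = M (z_t z_tᵀ)`, multiplying the fixed-point
equation on the right by `G_t` turns it into `M G_{t-1} + M z_t z_tᵀ = B + M z_t z_tᵀ`, i.e.
`M G_{t-1} = B`. Both Gram matrices are `λ I` plus a positive semidefinite matrix, hence
positive definite and invertible.
-/

namespace Matrix

variable {m n K : Type*} [Fintype n] [DecidableEq n] [CommRing K]

theorem eq_mul_nonsing_inv_iff_mul_eq {A : Matrix n n K} (hA : IsUnit A) {M B : Matrix m n K} :
    M = B * A⁻¹ ↔ M * A = B := by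
  have hA' := (isUnit_iff_isUnit_det A).1 hA
  constructor
  · rintro rfl
    exact nonsing_inv_mul_cancel_right A B hA'
  · rintro rfl
    exact (mul_nonsing_inv_cancel_right A M hA').symm

theorem eq_add_mul_mul_add_inv_iff {G C : Matrix n n K} (hG : IsUnit G) (hGC : IsUnit (G + C))
    (B M : Matrix m n K) :
    M = (B + M * C) * (G + C)⁻¹ ↔ M = B * G⁻¹ := by
  rw [eq_mul_nonsing_inv_iff_mul_eq hGC, eq_mul_nonsing_inv_iff_mul_eq hG, Matrix.mul_add,
    add_left_inj]

theorem posDef_smul_one_add_sum_vecMulVec_self {ι : Type*} {lam : ℝ} (hlam : 0 < lam)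
    (z : ι → n → ℝ) (S : Finset ι) :
    (lam • (1 : Matrix n n ℝ) + ∑ s ∈ S, vecMulVec (z s) (z s)).PosDef :=
  (PosDef.one.smul hlam).add_posSemidef <|
    posSemidef_sum S fun s _ => posSemidef_vecMulVec_self_star (z s)

end Matrix

theorem pols_self_consistent_hint_is_ols_general
    (d p t : ℕ) (ht : 1 ≤ t) (lam : ℝ) (hlam : 0 < lam)
    (z : ℕ → Fin d → ℝ)
    (Gt Gt1 : Matrix (Fin d) (Fin d) ℝ) (B : Matrix (Fin p) (Fin d) ℝ)
    (hGt : Gt = lam • (1 : Matrix (Fin d) (Fin d) ℝ) +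
      ∑ s ∈ Finset.Icc 1 t, Matrix.vecMulVec (z s) (z s))
    (hGt1 : Gt1 = lam • (1 : Matrix (Fin d) (Fin d) ℝ) +
      ∑ s ∈ Finset.Icc 1 (t - 1), Matrix.vecMulVec (z s) (z s)) :
    ∀ M : Matrix (Fin p) (Fin d) ℝ,
      M = (B + Matrix.vecMulVec (M.mulVec (z t)) (z t)) * Gt⁻¹ ↔ M = B * Gt1⁻¹ := by
  obtain ⟨k, rfl⟩ : ∃ k, t = k + 1 := ⟨t - 1, by omega⟩
  rw [Nat.add_sub_cancel] at hGt1
  have hsplit : Gt = Gt1 + vecMulVec (z (k + 1)) (z (k + 1)) := by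
    rw [hGt, hGt1, Finset.sum_Icc_succ_top (by omega), add_assoc]
  have hGt_unit : IsUnit Gt := (hGt ▸ posDef_smul_one_add_sum_vecMulVec_self hlam z _).isUnit
  have hGt1_unit : IsUnit Gt1 := (hGt1 ▸ posDef_smul_one_add_sum_vecMulVec_self hlam z _).isUnit
  intro M
  rw [← mul_vecMulVec, hsplit]
  exact eq_add_mul_mul_add_inv_iff hGt1_unit (hsplit ▸ hGt_unit) B M

/-- the self-consistent hint recovers OLS.  With
`G_t = λI + ∑_{s=1}^t z_s z_sᵀ`, `G_{t-1} = λI + ∑_{s=1}^{t-1} z_s z_sᵀ`, and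
`B_{t-1} = ∑_{s=1}^{t-1} y_s z_sᵀ`, the matrix `M = B_{t-1} G_{t-1}⁻¹` is the unique
solution of the fixed-point equation `M = (B_{t-1} + (M z_t) z_tᵀ) G_t⁻¹`; hence the
POLS iterate with the self-consistent hint `ỹ_t = M_t^{pols} z_t` is exactly the
regularized OLS iterate `M_t^{ols} = B_{t-1} G_{t-1}⁻¹`. -/
theorem pols_self_consistent_hint_is_ols
    (d p t : ℕ) (ht : 1 ≤ t) (lam : ℝ) (hlam : 0 < lam)
    (z : ℕ → Fin d → ℝ) (y : ℕ → Fin p → ℝ)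
    (Gt Gt1 : Matrix (Fin d) (Fin d) ℝ) (B : Matrix (Fin p) (Fin d) ℝ)
    (hGt : Gt = lam • (1 : Matrix (Fin d) (Fin d) ℝ) +
      ∑ s ∈ Finset.Icc 1 t, Matrix.vecMulVec (z s) (z s))
    (hGt1 : Gt1 = lam • (1 : Matrix (Fin d) (Fin d) ℝ) +
      ∑ s ∈ Finset.Icc 1 (t - 1), Matrix.vecMulVec (z s) (z s))
    (hB : B = ∑ s ∈ Finset.Icc 1 (t - 1), Matrix.vecMulVec (y s) (z s)) :
    ∀ M : Matrix (Fin p) (Fin d) ℝ,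
      M = (B + Matrix.vecMulVec (M.mulVec (z t)) (z t)) * Gt⁻¹ ↔ M = B * Gt1⁻¹ :=
  pols_self_consistent_hint_is_ols_general d p t ht lam hlam z Gt Gt1 B hGt hGt1
end

section
/- Under the system assumptions, let L ∈ ℝ^{n×p} satisfy ‖L‖ ≤ κ and let A_L := A − LC be (κ, γ)-strongly stable, and let ŷ_t^{TR}(L) := ∑_{k=0}^{H-1} C A_L^k L y_{t-k-1}. If H ≥ ⌈γ⁻¹(r+1) log(1+T)⌉, then ∑_{t=1}^T ‖ŷ_t^{LB}(L) − ŷ_t^{TR}(L)‖ ≤ C_trun and ∑_{t=1}^T ‖ŷ_t^{LB}(L) − ŷ_t^{TR}(L)‖² ≤ C_trun², where C_trun := γ⁻¹ ‖C‖ κ² C_y and C_y := ‖C‖ κ_A C_w + C_v. -/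
/-- The operator norm of a matrix induced by the Euclidean (ℓ²) norms.  For a column
matrix (a vector), this is the Euclidean norm of the vector. -/
noncomputable def opNorm {𝕜 : Type*} [RCLike 𝕜] {m n : Type*} [Fintype m] [Fintype n]
    [DecidableEq n] (A : Matrix m n 𝕜) : ℝ :=
  ‖LinearMap.toContinuousLinearMap (Matrix.toEuclideanLin A)‖

/-- The nilpotent upper shift matrix: `N i (i+1) = 1`, all other entries `0`. -/
def shiftMatrix (K : Type*) [Ring K] (m : ℕ) : Matrix (Fin m) (Fin m) K :=
  Matrix.of fun i j => if (i : ℕ) + 1 = (j : ℕ) then 1 else 0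

/-- The Jordan block `λ I + N` of size `m` with eigenvalue `λ`. -/
noncomputable def jordanBlock (K : Type*) [Ring K] (lam : K) (m : ℕ) :
    Matrix (Fin m) (Fin m) K :=
  lam • (1 : Matrix (Fin m) (Fin m) K) + shiftMatrix K m

/-- `A = S J S⁻¹` over `ℂ`, where `J` is block diagonal with Jordan blocks of size at
most `r` whose eigenvalues have absolute value at most `1`, and `κA = ‖S‖ ‖S⁻¹‖`. -/
def HasJordanForm (n r : ℕ) (A : Matrix (Fin n) (Fin n) ℝ) (κA : ℝ) : Prop :=
  ∃ (b : ℕ) (msize : Fin b → ℕ) (lam : Fin b → ℂ)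
    (S : Matrix (Fin n) ((i : Fin b) × Fin (msize i)) ℂ)
    (S' : Matrix ((i : Fin b) × Fin (msize i)) (Fin n) ℂ),
      (∀ i, msize i ≤ r) ∧ (∀ i, ‖lam i‖ ≤ 1) ∧
      S * S' = 1 ∧ S' * S = 1 ∧
      A.map (Complex.ofReal) =
        S * Matrix.blockDiagonal' (fun i => jordanBlock ℂ (lam i) (msize i)) * S' ∧
      κA = opNorm S * opNorm S'

/-- `B` is `(κ, γ)`-strongly stable: `B = P Q P⁻¹` with `‖Q‖ ≤ 1 - γ` and
`‖P‖‖P⁻¹‖ ≤ κ`, for some `κ > 0` and `γ ∈ (0, 1]`. -/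
def StronglyStable (n : ℕ) (κ γ : ℝ) (B : Matrix (Fin n) (Fin n) ℝ) : Prop :=
  0 < κ ∧ 0 < γ ∧ γ ≤ 1 ∧
  ∃ P Q : Matrix (Fin n) (Fin n) ℝ,
    B = P * Q * P⁻¹ ∧ opNorm Q ≤ 1 - γ ∧ opNorm P * opNorm P⁻¹ ≤ κ

/-!
Unrolling the predictor recursion gives `x̂_t = ∑_{k<t} A_Lᵏ L y_{t-k-1}`, so the truncation error
at time `t` is the tail `∑_{H ≤ k < t} C A_Lᵏ L y_{t-k-1}`, which strong stability bounds by
`‖C‖ κ² γ⁻¹ (1-γ)^H max_{s ≤ T} ‖y_s‖`. Unrolling the system, and expanding the powers of the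
Jordan blocks binomially (the nilpotent part dies after `r` steps), gives
`‖Aʲ‖ ≤ κ_A ∑_{i<r} (j choose i)`, hence `‖y_s‖ ≤ ‖C‖ κ_A C_w B_T + C_v` for `s ≤ T`, where
`B_T = ∑_{j<T} ∑_{i<r} (j choose i)` satisfies `T B_T ≤ (1+T)^(r+1)`. The choice of `H` makes `(1-γ)^H ≤ e^{-γH} ≤ (1+T)^{-(r+1)}`, which absorbs
both this polynomial growth and the factor `T` from summing over `t`. The squared bound follows
from `∑ aₜ² ≤ (∑ aₜ)²`.
-/

open scoped Matrix.Norms.L2Operator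
open Finset Matrix

theorem opNorm_eq_norm {𝕜 : Type*} [RCLike 𝕜] {m n : Type*} [Fintype m] [Fintype n]
    [DecidableEq n] (A : Matrix m n 𝕜) : opNorm A = ‖A‖ := rfl

namespace Matrix

variable {𝕜 : Type*} [RCLike 𝕜] {m n l o : Type*} [Fintype m] [Fintype n] [Fintype l]
  [Fintype o] [DecidableEq n] [DecidableEq l] [DecidableEq o]

theorem l2_opNorm_le_of_sum_sq_le (M : Matrix m n 𝕜) {c : ℝ} (hc : 0 ≤ c)
    (h : ∀ x : n → 𝕜, ∑ i, ‖(M *ᵥ x) i‖ ^ 2 ≤ c ^ 2 * ∑ j, ‖x j‖ ^ 2) : ‖M‖ ≤ c :=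
  ContinuousLinearMap.opNorm_le_bound _ hc fun x => by
    rw [← sq_le_sq₀ (norm_nonneg _) (by positivity), mul_pow, EuclideanSpace.norm_sq_eq,
      EuclideanSpace.norm_sq_eq]
    exact h x

theorem sum_sq_norm_mulVec_le (M : Matrix m n 𝕜) (x : n → 𝕜) :
    ∑ i, ‖(M *ᵥ x) i‖ ^ 2 ≤ ‖M‖ ^ 2 * ∑ j, ‖x j‖ ^ 2 := by
  have := pow_le_pow_left₀ (norm_nonneg _) (l2_opNorm_mulVec M (WithLp.toLp 2 x)) 2
  rwa [mul_pow, EuclideanSpace.norm_sq_eq, EuclideanSpace.norm_sq_eq] at this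

theorem l2_opNorm_mul_mul_le (A : Matrix m n 𝕜) (B : Matrix n l 𝕜) (C : Matrix l o 𝕜) :
    ‖A * B * C‖ ≤ ‖A‖ * ‖B‖ * ‖C‖ :=
  (l2_opNorm_mul _ _).trans (mul_le_mul_of_nonneg_right (l2_opNorm_mul _ _) (norm_nonneg _))

theorem l2_opNorm_le_l2_opNorm_map_ofReal (M : Matrix m n ℝ) :
    ‖M‖ ≤ ‖M.map ((↑) : ℝ → ℂ)‖ :=
  l2_opNorm_le_of_sum_sq_le M (norm_nonneg _) fun x => by
    have hmulVec : ∀ i, (M.map ((↑) : ℝ → ℂ) *ᵥ fun j => (x j : ℂ)) i = ((M *ᵥ x) i : ℂ) :=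
      fun i => (RingHom.map_mulVec Complex.ofRealHom M x i).symm
    simpa only [hmulVec, Complex.norm_real] using
      sum_sq_norm_mulVec_le (M.map ((↑) : ℝ → ℂ)) (fun j => (x j : ℂ))

theorem l2_opNorm_one_le : ‖(1 : Matrix n n 𝕜)‖ ≤ 1 := by
  rw [cstar_norm_def, map_one]
  exact ContinuousLinearMap.norm_id_le

theorem l2_opNorm_pow_le_one {M : Matrix n n 𝕜} (hM : ‖M‖ ≤ 1) (k : ℕ) : ‖M ^ k‖ ≤ 1 := by
  rcases Nat.eq_zero_or_pos k with rfl | hk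
  · exact pow_zero M ▸ l2_opNorm_one_le
  · exact (norm_pow_le' M hk).trans (pow_le_one₀ (norm_nonneg _) hM)

theorem l2_opNorm_blockDiagonal'_le {o : Type*} [Fintype o] [DecidableEq o] {d : o → Type*}
    [∀ i, Fintype (d i)] [∀ i, DecidableEq (d i)] (J : ∀ i, Matrix (d i) (d i) 𝕜) {c : ℝ}
    (hc : 0 ≤ c) (hJ : ∀ i, ‖J i‖ ≤ c) : ‖blockDiagonal' J‖ ≤ c := by
  refine l2_opNorm_le_of_sum_sq_le _ hc fun x => ?_
  have hblock : ∀ i j, (blockDiagonal' J *ᵥ x) ⟨i, j⟩ = (J i *ᵥ fun k => x ⟨i, k⟩) j := by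
    intro i j
    simp only [mulVec, dotProduct, ← univ_sigma_univ, sum_sigma]
    rw [sum_eq_single i (fun i' _ hi' => sum_eq_zero fun k _ => by
      rw [blockDiagonal'_apply_ne _ _ _ (Ne.symm hi'), zero_mul]) (by simp)]
    exact sum_congr rfl fun k _ => by rw [blockDiagonal'_apply_eq]
  simp only [← univ_sigma_univ, sum_sigma, hblock]
  rw [mul_sum]
  exact sum_le_sum fun i _ => (sum_sq_norm_mulVec_le _ _).trans <|
    mul_le_mul_of_nonneg_right (pow_le_pow_left₀ (norm_nonneg _) (hJ i) 2)
      (sum_nonneg fun _ _ => by positivity)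

theorem conj_pow_of_mul_eq_one {R : Type*} [Semiring R] {a b : Type*} [Fintype a]
    [DecidableEq a] [Fintype b] [DecidableEq b] {S : Matrix a b R} {S' : Matrix b a R}
    (hSS' : S * S' = 1) (hS'S : S' * S = 1) (J : Matrix b b R) (j : ℕ) :
    (S * J * S') ^ j = S * J ^ j * S' := by
  induction j with
  | zero => rw [pow_zero, pow_zero, Matrix.mul_one, hSS']
  | succ j ih =>
    rw [pow_succ, ih, pow_succ]
    calc S * J ^ j * S' * (S * J * S') = S * J ^ j * (S' * S) * J * S' := by
          simp only [Matrix.mul_assoc]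
      _ = S * (J ^ j * J) * S' := by rw [hS'S, Matrix.mul_one]; simp only [Matrix.mul_assoc]

end Matrix

section JordanForm

variable {𝕜 : Type*} [RCLike 𝕜]

theorem shiftMatrix_pow_eq_zero (K : Type*) [Ring K] {m k : ℕ} (hk : m ≤ k) :
    shiftMatrix K m ^ k = 0 := by
  suffices h : ∀ k (i j : Fin m), (j : ℕ) < i + k → (shiftMatrix K m ^ k) i j = 0 by
    ext i j
    exact h k i j (by omega)
  intro k
  induction k with
  | zero => exact fun i j hji => one_apply_ne (fun hij => by subst hij; omega)
  | succ k ih =>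
    intro i j hji
    rw [pow_succ', mul_apply]
    refine sum_eq_zero fun l _ => ?_
    by_cases hil : (i : ℕ) + 1 = l
    · rw [ih l j (by omega), mul_zero]
    · simp [shiftMatrix, hil]

theorem norm_shiftMatrix_le_one (m : ℕ) : ‖shiftMatrix 𝕜 m‖ ≤ 1 := by
  refine l2_opNorm_le_of_sum_sq_le _ zero_le_one fun x => ?_
  cases m with
  | zero => simp
  | succ m =>
    have hlast : (shiftMatrix 𝕜 (m + 1) *ᵥ x) (Fin.last m) = 0 := by
      simp only [mulVec, dotProduct, shiftMatrix, of_apply, ite_mul, one_mul, zero_mul]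
      exact sum_eq_zero fun j _ => if_neg (by simp only [Fin.val_last]; omega)
    have hcastSucc : ∀ i : Fin m, (shiftMatrix 𝕜 (m + 1) *ᵥ x) i.castSucc = x i.succ := by
      intro i
      have hsucc : ∀ j : Fin (m + 1), (i.castSucc : ℕ) + 1 = j ↔ i.succ = j := fun j => by
        simp [Fin.ext_iff]
      simp only [mulVec, dotProduct, shiftMatrix, of_apply, hsucc, ite_mul, one_mul, zero_mul,
        sum_ite_eq, mem_univ, if_true]
    rw [Fin.sum_univ_castSucc, Fin.sum_univ_succ, hlast]
    simp only [hcastSucc, norm_zero, one_pow, one_mul, zero_pow two_ne_zero, add_zero]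
    exact le_add_of_nonneg_left (sq_nonneg _)

theorem norm_jordanBlock_pow_le {lam : 𝕜} (hlam : ‖lam‖ ≤ 1) (m j : ℕ) :
    ‖jordanBlock 𝕜 lam m ^ j‖ ≤ ∑ i ∈ range m, (j.choose i : ℝ) := by
  have hscalar : ‖lam • (1 : Matrix (Fin m) (Fin m) 𝕜)‖ ≤ 1 :=
    (norm_smul_le _ _).trans (mul_le_one₀ hlam (norm_nonneg _) l2_opNorm_one_le)
  have hterm : ∀ i ∈ range (j + 1), ‖shiftMatrix 𝕜 m ^ i * (lam • 1) ^ (j - i) *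
      (j.choose i : Matrix (Fin m) (Fin m) 𝕜)‖ ≤ if i < m then (j.choose i : ℝ) else 0 := by
    intro i _
    split_ifs with him
    · rw [← nsmul_eq_mul']
      refine norm_nsmul_le.trans (mul_le_of_le_one_right (Nat.cast_nonneg _) ?_)
      exact (l2_opNorm_mul _ _).trans (mul_le_one₀ (l2_opNorm_pow_le_one
        (norm_shiftMatrix_le_one m) i) (norm_nonneg _) (l2_opNorm_pow_le_one hscalar _))
    · rw [shiftMatrix_pow_eq_zero 𝕜 (not_lt.1 him), zero_mul, zero_mul, norm_zero]
  rw [jordanBlock, add_comm, ((Commute.one_right _).smul_right lam).add_pow]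
  calc _ ≤ ∑ i ∈ range (j + 1), if i < m then (j.choose i : ℝ) else 0 :=
        (norm_sum_le _ _).trans (sum_le_sum hterm)
    _ = ∑ i ∈ (range (j + 1)).filter (· < m), (j.choose i : ℝ) := (sum_filter _ _).symm
    _ ≤ ∑ i ∈ range m, (j.choose i : ℝ) :=
        sum_le_sum_of_subset_of_nonneg (fun i hi => by simp only [mem_filter, mem_range] at hi ⊢; omega)
          (fun _ _ _ => Nat.cast_nonneg _)

theorem HasJordanForm.nonneg {n r : ℕ} {A : Matrix (Fin n) (Fin n) ℝ} {κA : ℝ}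
    (h : HasJordanForm n r A κA) : 0 ≤ κA := by
  obtain ⟨-, -, -, S, S', -, -, -, -, -, rfl⟩ := h
  exact mul_nonneg (norm_nonneg S) (norm_nonneg S')

theorem HasJordanForm.norm_pow_le {n r : ℕ} {A : Matrix (Fin n) (Fin n) ℝ} {κA : ℝ}
    (h : HasJordanForm n r A κA) (j : ℕ) : ‖A ^ j‖ ≤ κA * ∑ i ∈ range r, (j.choose i : ℝ) := by
  obtain ⟨b, d, lam, S, S', hd, hlam, hSS', hS'S, hA, rfl⟩ := h
  have hJ : ‖(blockDiagonal' fun i => jordanBlock ℂ (lam i) (d i)) ^ j‖ ≤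
      ∑ i ∈ range r, (j.choose i : ℝ) := by
    rw [← blockDiagonal'_pow]
    refine l2_opNorm_blockDiagonal'_le _ (sum_nonneg fun _ _ => Nat.cast_nonneg _) fun i => ?_
    exact (norm_jordanBlock_pow_le (hlam i) _ j).trans (sum_le_sum_of_subset_of_nonneg
      (range_subset_range.2 (hd i)) fun _ _ _ => Nat.cast_nonneg _)
  have hAj : (A ^ j).map ((↑) : ℝ → ℂ) =
      S * (blockDiagonal' fun i => jordanBlock ℂ (lam i) (d i)) ^ j * S' := by
    rw [← conj_pow_of_mul_eq_one hSS' hS'S, ← hA]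
    exact map_pow Complex.ofRealHom.mapMatrix A j
  calc ‖A ^ j‖ ≤ ‖(A ^ j).map ((↑) : ℝ → ℂ)‖ := l2_opNorm_le_l2_opNorm_map_ofReal _
    _ ≤ ‖S‖ * ‖(blockDiagonal' fun i => jordanBlock ℂ (lam i) (d i)) ^ j‖ * ‖S'‖ := by
      rw [hAj]; exact l2_opNorm_mul_mul_le _ _ _
    _ ≤ ‖S‖ * (∑ i ∈ range r, (j.choose i : ℝ)) * ‖S'‖ := by gcongr
    _ = opNorm S * opNorm S' * ∑ i ∈ range r, (j.choose i : ℝ) := by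
      rw [opNorm_eq_norm, opNorm_eq_norm]; ring

theorem StronglyStable.norm_pow_le {n : ℕ} {κ γ : ℝ} {B : Matrix (Fin n) (Fin n) ℝ}
    (h : StronglyStable n κ γ B) {k : ℕ} (hk : k ≠ 0) : ‖B ^ k‖ ≤ κ * (1 - γ) ^ k := by
  obtain ⟨hκ, -, hγ1, P, Q, rfl, hQ, hP⟩ := h
  rw [opNorm_eq_norm] at hQ
  rw [opNorm_eq_norm, opNorm_eq_norm] at hP
  by_cases hdet : IsUnit P.det
  · rw [conj_pow_of_mul_eq_one (mul_nonsing_inv P hdet) (nonsing_inv_mul P hdet)]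
    calc ‖P * Q ^ k * P⁻¹‖ ≤ ‖P‖ * ‖Q ^ k‖ * ‖P⁻¹‖ := l2_opNorm_mul_mul_le _ _ _
      _ ≤ ‖P‖ * (1 - γ) ^ k * ‖P⁻¹‖ := by
        gcongr
        exact (norm_pow_le' Q (Nat.pos_of_ne_zero hk)).trans
          (pow_le_pow_left₀ (norm_nonneg _) hQ k)
      _ = ‖P‖ * ‖P⁻¹‖ * (1 - γ) ^ k := by ring
      _ ≤ κ * (1 - γ) ^ k := by gcongr
  · -- `P⁻¹ = 0` for singular `P`, so `B = 0`
    rw [nonsing_inv_apply_not_isUnit P hdet, Matrix.mul_zero, zero_pow hk, norm_zero]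
    exact mul_nonneg hκ.le (pow_nonneg (by linarith) k)

end JordanForm

section LinearRecursion

variable {n o : Type*} [Fintype n] [DecidableEq n]

theorem eq_sum_pow_mul_of_recursion {R : Type*} [Semiring R] {M : Matrix n n R}
    {z u : ℤ → Matrix n o R} (h0 : z 0 = 0) (h : ∀ t, z (t + 1) = M * z t + u t) (N : ℕ) :
    z N = ∑ j ∈ range N, M ^ j * u (N - j - 1) := by
  induction N with
  | zero => simpa using h0
  | succ N ih =>
    rw [Nat.cast_succ, h, ih, Matrix.mul_sum, sum_range_succ']
    congr 1
    · refine sum_congr rfl fun j _ => ?_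
      rw [← Matrix.mul_assoc, ← pow_succ']
      congr 3
      push_cast
      ring
    · simp

theorem sub_sum_range_eq_sum_Ico {R : Type*} [Ring R] {M : Matrix n n R}
    {z u : ℤ → Matrix n o R} (h0 : z 0 = 0) (h : ∀ t, z (t + 1) = M * z t + u t)
    (hu0 : ∀ s < 0, u s = 0) (N H : ℕ) :
    z N - ∑ k ∈ range H, M ^ k * u (N - k - 1) = ∑ k ∈ Ico H N, M ^ k * u (N - k - 1) := by
  rw [eq_sum_pow_mul_of_recursion h0 h]
  rcases le_total H N with hHN | hNH
  · rw [← sum_range_add_sum_Ico _ hHN, add_sub_cancel_left]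
  · rw [Ico_eq_empty_of_le hNH, sum_empty, sub_eq_zero]
    refine sum_subset (range_subset_range.2 hNH) fun k _ hk => ?_
    rw [hu0 _ (by simp only [mem_range, not_lt] at hk; omega), Matrix.mul_zero]

variable {𝕜 : Type*} [RCLike 𝕜] [Fintype o] [DecidableEq o] {M : Matrix n n 𝕜}
  {z u : ℤ → Matrix n o 𝕜}

theorem norm_le_of_recursion (h0 : ∀ s ≤ 0, z s = 0) (h : ∀ t, z (t + 1) = M * z t + u t)
    {a : ℕ → ℝ} {c : ℝ} (hM : ∀ j, ‖M ^ j‖ ≤ a j) (hu : ∀ s, ‖u s‖ ≤ c) (N : ℕ) {s : ℤ}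
    (hs : s ≤ N) : ‖z s‖ ≤ c * ∑ j ∈ range N, a j := by
  have hc : 0 ≤ c := (norm_nonneg _).trans (hu 0)
  have ha : ∀ j, 0 ≤ a j := fun j => (norm_nonneg _).trans (hM j)
  rcases le_or_gt s 0 with hs0 | hs0
  · rw [h0 s hs0, norm_zero]
    exact mul_nonneg hc (sum_nonneg fun j _ => ha j)
  lift s to ℕ using hs0.le
  rw [eq_sum_pow_mul_of_recursion (h0 0 le_rfl) h, mul_sum]
  calc _ ≤ ∑ j ∈ range s, c * a j := norm_sum_le_of_le _ fun j _ =>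
        (l2_opNorm_mul _ _).trans (by rw [mul_comm]; gcongr; exacts [hu _, hM j])
    _ ≤ ∑ j ∈ range N, c * a j := sum_le_sum_of_subset_of_nonneg
        (range_subset_range.2 (by exact_mod_cast hs)) fun j _ _ => mul_nonneg hc (ha j)

theorem norm_sub_sum_range_le (h0 : z 0 = 0) (h : ∀ t, z (t + 1) = M * z t + u t)
    (hu0 : ∀ s < 0, u s = 0) {κ ρ c : ℝ} (hκ : 0 ≤ κ) (hρ0 : 0 ≤ ρ) (hρ1 : ρ < 1) {N H : ℕ}
    (hM : ∀ k ≥ H, ‖M ^ k‖ ≤ κ * ρ ^ k) (hu : ∀ s < (N : ℤ), ‖u s‖ ≤ c) :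
    ‖z N - ∑ k ∈ range H, M ^ k * u (N - k - 1)‖ ≤ κ * c * (ρ ^ H / (1 - ρ)) := by
  have hc : 0 ≤ c := (norm_nonneg _).trans (hu (-1) (by omega))
  rw [sub_sum_range_eq_sum_Ico h0 h hu0]
  calc _ ≤ ∑ k ∈ Ico H N, κ * c * ρ ^ k := norm_sum_le_of_le _ fun k hk =>
        (l2_opNorm_mul _ _).trans <| by
          rw [mul_right_comm]
          exact mul_le_mul (hM k (mem_Ico.1 hk).1) (hu _ (by omega)) (norm_nonneg _) (by positivity)
    _ ≤ κ * c * (ρ ^ H / (1 - ρ)) := by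
      rw [← mul_sum]
      exact mul_le_mul_of_nonneg_left (geom_sum_Ico_le_of_lt_one hρ0 hρ1) (by positivity)

variable {p q : Type*} [Fintype p] [Fintype q]

theorem norm_output_le_of_recursion {x w : ℤ → Matrix n o 𝕜} {y v : ℤ → Matrix p o 𝕜}
    {A : Matrix n n 𝕜} {C : Matrix p n 𝕜} (hx0 : ∀ s ≤ 0, x s = 0)
    (hdyn : ∀ t, x (t + 1) = A * x t + w t) (hout : ∀ t, y t = C * x t + v t) {a : ℕ → ℝ}
    {Cw Cv : ℝ} (hA : ∀ j, ‖A ^ j‖ ≤ a j) (hw : ∀ t, ‖w t‖ ≤ Cw) (hv : ∀ t, ‖v t‖ ≤ Cv)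
    (N : ℕ) {s : ℤ} (hs : s ≤ N) : ‖y s‖ ≤ ‖C‖ * (Cw * ∑ j ∈ range N, a j) + Cv := by
  rw [hout]
  refine (norm_add_le _ _).trans (add_le_add ((l2_opNorm_mul _ _).trans ?_) (hv s))
  exact mul_le_mul_of_nonneg_left (norm_le_of_recursion hx0 hdyn hA hw N hs) (norm_nonneg _)

theorem norm_mul_sub_sum_range_le [DecidableEq p] {xhat : ℤ → Matrix n o 𝕜}
    {y : ℤ → Matrix p o 𝕜} (C : Matrix q n 𝕜) {L : Matrix n p 𝕜} (h0 : xhat 0 = 0)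
    (h : ∀ t, xhat (t + 1) = M * xhat t + L * y t) (hy0 : ∀ s < 0, y s = 0) {κ ρ c : ℝ}
    (hκ : 0 ≤ κ) (hρ0 : 0 ≤ ρ) (hρ1 : ρ < 1) {N H : ℕ} (hM : ∀ k ≥ H, ‖M ^ k‖ ≤ κ * ρ ^ k)
    (hy : ∀ s < (N : ℤ), ‖y s‖ ≤ c) :
    ‖C * xhat N - ∑ k ∈ range H, C * M ^ k * L * y (N - k - 1)‖ ≤
      ‖C‖ * (κ * (‖L‖ * c) * (ρ ^ H / (1 - ρ))) := by
  rw [show C * xhat N - ∑ k ∈ range H, C * M ^ k * L * y (N - k - 1) =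
      C * (xhat N - ∑ k ∈ range H, M ^ k * (L * y (N - k - 1))) by
    simp only [Matrix.mul_sub, Matrix.mul_sum, Matrix.mul_assoc]]
  refine (l2_opNorm_mul _ _).trans (mul_le_mul_of_nonneg_left ?_ (norm_nonneg _))
  exact norm_sub_sum_range_le h0 h (fun s hs => by rw [hy0 s hs, Matrix.mul_zero]) hκ hρ0 hρ1 hM
    fun s hs => (l2_opNorm_mul _ _).trans (mul_le_mul_of_nonneg_left (hy s hs) (norm_nonneg _))

end LinearRecursion

theorem card_mul_sum_sum_choose_le (T r : ℕ) :
    T * ∑ j ∈ range T, ∑ i ∈ range r, j.choose i ≤ (1 + T) ^ (r + 1) := by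
  have hgeom : T * ∑ i ∈ range r, T ^ i ≤ (T + 1) ^ r := by
    calc T * ∑ i ∈ range r, T ^ i ≤ (∑ i ∈ range r, (T + 1) ^ i) * T := by
          rw [mul_comm]; gcongr; omega
      _ ≤ (T + 1) ^ r := by rw [← geom_sum_mul_add]; exact Nat.le_succ _
  calc T * ∑ j ∈ range T, ∑ i ∈ range r, j.choose i
      ≤ T * ∑ _j ∈ range T, ∑ i ∈ range r, T ^ i := by
        gcongr with j hj i
        exact (Nat.choose_le_pow j i).trans (Nat.pow_le_pow_left (mem_range.1 hj).le i)
    _ = T * (T * ∑ i ∈ range r, T ^ i) := by rw [sum_const, card_range, smul_eq_mul]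
    _ ≤ (T + 1) * (T + 1) ^ r := by gcongr; omega
    _ = (1 + T) ^ (r + 1) := by ring

theorem one_sub_pow_mul_one_add_pow_le_one {γ : ℝ} (hγ : 0 < γ) (hγ1 : γ ≤ 1) {r H T : ℕ}
    (hH : γ⁻¹ * ((r : ℝ) + 1) * Real.log (1 + T) ≤ H) :
    (1 - γ) ^ H * (1 + T) ^ (r + 1) ≤ 1 := by
  have hlog : ((r : ℝ) + 1) * Real.log (1 + T) ≤ γ * H := by
    rw [inv_mul_eq_div, div_mul_eq_mul_div, div_le_iff₀' hγ] at hH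
    exact hH
  calc (1 - γ) ^ H * (1 + T) ^ (r + 1)
      ≤ Real.exp (-γ) ^ H * Real.exp (((r : ℝ) + 1) * Real.log (1 + T)) := by
        rw [← Nat.cast_add_one, ← Real.log_pow, Real.exp_log (by positivity)]
        gcongr
        linarith [Real.add_one_le_exp (-γ)]
    _ ≤ Real.exp (-γ) ^ H * Real.exp (γ * H) := by gcongr
    _ = 1 := by rw [← Real.exp_nat_mul, ← Real.exp_add]; ring_nf; exact Real.exp_zero

theorem card_mul_mul_one_sub_pow_le {a b γ : ℝ} (ha : 0 ≤ a) (hb : 0 ≤ b) (hγ : 0 < γ)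
    (hγ1 : γ ≤ 1) {r H T : ℕ} (hH : γ⁻¹ * ((r : ℝ) + 1) * Real.log (1 + T) ≤ H) :
    T * (a * ∑ j ∈ range T, ∑ i ∈ range r, (j.choose i : ℝ) + b) * (1 - γ) ^ H ≤ a + b := by
  have hdecay := one_sub_pow_mul_one_add_pow_le_one hγ hγ1 hH
  have hsum : (T : ℝ) * ∑ j ∈ range T, ∑ i ∈ range r, (j.choose i : ℝ) ≤ (1 + T) ^ (r + 1) := by
    exact_mod_cast card_mul_sum_sum_choose_le T r
  have hT : (T : ℝ) ≤ (1 + T) ^ (r + 1) :=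
    (le_add_of_nonneg_left zero_le_one).trans (le_self_pow₀ (by simp) r.add_one_ne_zero)
  have hpow : 0 ≤ (1 - γ) ^ H := pow_nonneg (by linarith) H
  calc _ = a * ((1 - γ) ^ H * (T * ∑ j ∈ range T, ∑ i ∈ range r, (j.choose i : ℝ))) +
        b * ((1 - γ) ^ H * T) := by ring
    _ ≤ a * 1 + b * 1 := by
      gcongr
      · exact (mul_le_mul_of_nonneg_left hsum hpow).trans hdecay
      · exact (mul_le_mul_of_nonneg_left hT hpow).trans hdecay
    _ = a + b := by ring

theorem luenberger_truncation_error_cumulative_general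
    (n p r H T : ℕ)
    (A : Matrix (Fin n) (Fin n) ℝ) (C : Matrix (Fin p) (Fin n) ℝ)
    (κA κ γ Cw Cv : ℝ)
    (hJordan : HasJordanForm n r A κA)
    (x w : ℤ → Matrix (Fin n) (Fin 1) ℝ) (y v : ℤ → Matrix (Fin p) (Fin 1) ℝ)
    (hx0 : ∀ s : ℤ, s ≤ 0 → x s = 0)
    (hv0 : ∀ s : ℤ, s ≤ 0 → v s = 0)
    (hdyn : ∀ t : ℤ, x (t + 1) = A * x t + w t)
    (hout : ∀ t : ℤ, y t = C * x t + v t)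
    (hw : ∀ t, opNorm (w t) ≤ Cw)
    (hv : ∀ t, opNorm (v t) ≤ Cv)
    (L : Matrix (Fin n) (Fin p) ℝ)
    (hL : opNorm L ≤ κ)
    (hstab : StronglyStable n κ γ (A - L * C))
    (xhat : ℤ → Matrix (Fin n) (Fin 1) ℝ)
    (hxhat0 : ∀ s : ℤ, s ≤ 0 → xhat s = 0)
    (hxhat : ∀ t : ℤ, xhat (t + 1) = (A - L * C) * xhat t + L * y t)
    (hH : ⌈γ⁻¹ * ((r : ℝ) + 1) * Real.log (1 + (T : ℝ))⌉ ≤ (H : ℤ)) :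
    (∑ t ∈ Finset.Icc (1 : ℤ) (T : ℤ),
        opNorm (C * xhat t -
          ∑ k ∈ Finset.range H, C * (A - L * C) ^ k * L * y (t - (k : ℤ) - 1))
      ≤ γ⁻¹ * opNorm C * κ ^ 2 * (opNorm C * (κA * Cw) + Cv)) ∧
    (∑ t ∈ Finset.Icc (1 : ℤ) (T : ℤ),
        (opNorm (C * xhat t -
          ∑ k ∈ Finset.range H, C * (A - L * C) ^ k * L * y (t - (k : ℤ) - 1))) ^ 2
      ≤ (γ⁻¹ * opNorm C * κ ^ 2 * (opNorm C * (κA * Cw) + Cv)) ^ 2) := by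
  obtain ⟨hκ, hγ, hγ1, -⟩ := id hstab
  simp only [opNorm_eq_norm] at hw hv hL ⊢
  have hH' : γ⁻¹ * ((r : ℝ) + 1) * Real.log (1 + T) ≤ H := by exact_mod_cast Int.ceil_le.1 hH
  have hCw : 0 ≤ Cw := (norm_nonneg _).trans (hw 0)
  have hCv : 0 ≤ Cv := (norm_nonneg _).trans (hv 0)
  set Y : ℝ := ‖C‖ * (κA * Cw) * ∑ j ∈ range T, ∑ i ∈ range r, (j.choose i : ℝ) + Cv
  have hy0 : ∀ s ≤ 0, y s = 0 := fun s hs => by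
    rw [hout, hx0 s hs, hv0 s hs, Matrix.mul_zero, add_zero]
  have hy : ∀ s ≤ (T : ℤ), ‖y s‖ ≤ Y := fun s hs =>
    (norm_output_le_of_recursion hx0 hdyn hout hJordan.norm_pow_le hw hv T hs).trans_eq
      (by rw [← mul_sum]; ring)
  have herr : ∀ t ∈ Icc (1 : ℤ) T, ‖C * xhat t - ∑ k ∈ range H, C * (A - L * C) ^ k * L *
      y (t - k - 1)‖ ≤ ‖C‖ * (κ * (κ * Y) * ((1 - γ) ^ H / γ)) := by
    intro t ht
    obtain ⟨ht1, htT⟩ := mem_Icc.1 ht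
    lift t to ℕ using by omega
    have hH0 : H ≠ 0 := by
      have hlog : 0 < Real.log (1 + T) := Real.log_pos (by norm_cast; omega)
      have hHpos : (0 : ℝ) < H := (by positivity : (0 : ℝ) < _).trans_le hH'
      exact_mod_cast hHpos.ne'
    have := norm_mul_sub_sum_range_le (N := t) (H := H) C (hxhat0 0 le_rfl) hxhat
      (fun s hs => hy0 s hs.le) hκ.le (sub_nonneg.2 hγ1) (by linarith)
      (fun k hk => hstab.norm_pow_le (by omega)) fun s hs => hy s (by omega)
    rw [sub_sub_cancel] at this
    exact this.trans (by gcongr; exact (norm_nonneg _).trans (hy 0 (by omega)))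
  have hsum : ∑ t ∈ Icc (1 : ℤ) T, ‖C * xhat t - ∑ k ∈ range H, C * (A - L * C) ^ k * L *
      y (t - k - 1)‖ ≤ γ⁻¹ * ‖C‖ * κ ^ 2 * (‖C‖ * (κA * Cw) + Cv) := by
    calc _ ≤ T * (‖C‖ * (κ * (κ * Y) * ((1 - γ) ^ H / γ))) := by
          simpa using sum_le_card_nsmul _ _ _ herr
      _ = γ⁻¹ * ‖C‖ * κ ^ 2 * (T * Y * (1 - γ) ^ H) := by field_simp
      _ ≤ γ⁻¹ * ‖C‖ * κ ^ 2 * (‖C‖ * (κA * Cw) + Cv) := by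
        gcongr
        exact card_mul_mul_one_sub_pow_le (by have := hJordan.nonneg; positivity) hCv hγ hγ1 hH'
  exact ⟨hsum, (sum_sq_le_sq_sum_of_nonneg fun t _ => norm_nonneg _).trans
    (pow_le_pow_left₀ (sum_nonneg fun t _ => norm_nonneg _) hsum 2)⟩

/-- cumulative Luenberger truncation error.  If
`H ≥ ⌈γ⁻¹(r+1) log(1+T)⌉` then `∑_{t=1}^T ‖ŷ_t^{LB} − ŷ_t^{TR}‖ ≤ C_trun` and
`∑_{t=1}^T ‖ŷ_t^{LB} − ŷ_t^{TR}‖² ≤ C_trun²`, where `C_trun = γ⁻¹‖C‖κ²C_y` and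
`C_y = ‖C‖κ_A C_w + C_v`. -/
theorem luenberger_truncation_error_cumulative
    (n p r H T : ℕ)
    (A : Matrix (Fin n) (Fin n) ℝ) (C : Matrix (Fin p) (Fin n) ℝ)
    (κA κ γ Cw Cv : ℝ)
    (hJordan : HasJordanForm n r A κA)
    (x w : ℤ → Matrix (Fin n) (Fin 1) ℝ) (y v : ℤ → Matrix (Fin p) (Fin 1) ℝ)
    (hx0 : ∀ s : ℤ, s ≤ 0 → x s = 0)
    (hw0 : ∀ s : ℤ, s < 0 → w s = 0)
    (hv0 : ∀ s : ℤ, s ≤ 0 → v s = 0)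
    (hdyn : ∀ t : ℤ, x (t + 1) = A * x t + w t)
    (hout : ∀ t : ℤ, y t = C * x t + v t)
    (hw : ∀ t, opNorm (w t) ≤ Cw)
    (hv : ∀ t, opNorm (v t) ≤ Cv)
    (L : Matrix (Fin n) (Fin p) ℝ)
    (hL : opNorm L ≤ κ)
    (hstab : StronglyStable n κ γ (A - L * C))
    (xhat : ℤ → Matrix (Fin n) (Fin 1) ℝ)
    (hxhat0 : ∀ s : ℤ, s ≤ 0 → xhat s = 0)
    (hxhat : ∀ t : ℤ, xhat (t + 1) = (A - L * C) * xhat t + L * y t)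
    (hH : ⌈γ⁻¹ * ((r : ℝ) + 1) * Real.log (1 + (T : ℝ))⌉ ≤ (H : ℤ)) :
    (∑ t ∈ Finset.Icc (1 : ℤ) (T : ℤ),
        opNorm (C * xhat t -
          ∑ k ∈ Finset.range H, C * (A - L * C) ^ k * L * y (t - (k : ℤ) - 1))
      ≤ γ⁻¹ * opNorm C * κ ^ 2 * (opNorm C * (κA * Cw) + Cv)) ∧
    (∑ t ∈ Finset.Icc (1 : ℤ) (T : ℤ),
        (opNorm (C * xhat t -
          ∑ k ∈ Finset.range H, C * (A - L * C) ^ k * L * y (t - (k : ℤ) - 1))) ^ 2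
      ≤ (γ⁻¹ * opNorm C * κ ^ 2 * (opNorm C * (κA * Cw) + Cv)) ^ 2) :=
  luenberger_truncation_error_cumulative_general n p r H T A C κA κ γ Cw Cv hJordan x w y v hx0 hv0
    hdyn hout hw hv L hL hstab xhat hxhat0 hxhat hH
end

section
/- Consider the system x_{t+1} = A x_t + w_t, y_t = C x_t + v_t with x_0 = 0 and the conventions y_s = 0 for s ≤ 0, w_s = 0 for s < 0, v_s = 0 for s ≤ 0. Let c_0 = 1 and c_1, …, c_m ∈ ℝ, let q(z) := ∑_{i=0}^m c_i z^{m-i}, and define the hint ỹ_t := −∑_{i=1}^m c_i y_{t-i}, so that the residual is Δ_t := y_t − ỹ_t = ∑_{i=0}^m c_i y_{t-i}. Then for all t ≥ 1, Δ_t = ∑_{i=0}^m c_i v_{t-i} + C ∑_{s=0}^{m-1} (∑_{i=0}^{s} c_i A^{s-i}) w_{t-1-s} + C ∑_{s=0}^{t-m-1} q(A) A^{s} w_{t-m-1-s}. -/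
/-!
Unrolling the recursion gives `x τ = ∑_{s ≥ 0} A^s w_{τ-1-s}`, a finite sum because `w` vanishes
at negative times. Substituting into `∑_i c_i x_{t-i}` and collecting the coefficient of
`w_{t-1-u}` gives `∑_{i ≤ min u m} c_i A^{u-i}`: for `u < m` this is a truncation of `q`, and for
`u = m + s` it is `q(A) A^s`. The measurement noise passes through the filter unchanged.
-/

open Finset

variable {R ι κ : Type*} [CommSemiring R] [Fintype ι] [DecidableEq ι]

/-- Coefficient of `w_{τ-1-u}` in `∑_{i ≤ m} c_i x_{τ-i}`. -/
def filteredImpulse (c : ℕ → R) (A : Matrix ι ι R) (m u : ℕ) : Matrix ι ι R :=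
  ∑ i ∈ range (min u m + 1), c i • A ^ (u - i)

theorem filteredImpulse_of_lt (c : ℕ → R) (A : Matrix ι ι R) {m u : ℕ} (h : u < m) :
    filteredImpulse c A m u = ∑ i ∈ range (u + 1), c i • A ^ (u - i) := by
  rw [filteredImpulse, min_eq_left h.le]

theorem filteredImpulse_add (c : ℕ → R) (A : Matrix ι ι R) (m s : ℕ) :
    filteredImpulse c A m (m + s) = (∑ i ∈ range (m + 1), c i • A ^ (m - i)) * A ^ s := by
  rw [filteredImpulse, min_eq_right (Nat.le_add_right m s), Finset.sum_mul]
  refine sum_congr rfl fun i hi => ?_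
  have hi : i ≤ m := Nat.lt_succ_iff.mp (mem_range.mp hi)
  rw [Matrix.smul_mul, ← pow_add, Nat.sub_add_comm hi]

section LinearSystem

variable {A : Matrix ι ι R} {x w : ℤ → Matrix ι κ R}

theorem state_eq_sum_range (hx0 : ∀ s : ℤ, s ≤ 0 → x s = 0) (hw0 : ∀ s : ℤ, s < 0 → w s = 0)
    (hdyn : ∀ t : ℤ, x (t + 1) = A * x t + w t) :
    ∀ (N : ℕ) (τ : ℤ), τ ≤ N → x τ = ∑ s ∈ range N, A ^ s * w (τ - 1 - s) := by
  intro N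
  induction N with
  | zero => intro τ hτ; simpa using hx0 τ (by exact_mod_cast hτ)
  | succ N ih =>
    intro τ hτ
    rcases le_or_gt τ N with hτN | hτN
    · rw [sum_range_succ, ← ih τ hτN, hw0 _ (by omega), Matrix.mul_zero, add_zero]
    · obtain rfl : τ = N + 1 := by push_cast at hτ; omega
      rw [hdyn, ih N le_rfl, Matrix.mul_sum, sum_range_succ']
      congr 1
      · refine sum_congr rfl fun s _ => ?_
        rw [← Matrix.mul_assoc, ← pow_succ']
        congr 2
        push_cast
        ring
      · simp

theorem shifted_state_eq_sum_range (hx0 : ∀ s : ℤ, s ≤ 0 → x s = 0)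
    (hw0 : ∀ s : ℤ, s < 0 → w s = 0) (hdyn : ∀ t : ℤ, x (t + 1) = A * x t + w t)
    {N : ℕ} {τ : ℤ} (hτ : τ ≤ N) (i : ℕ) :
    x (τ - i) = ∑ u ∈ range N, if i ≤ u then A ^ (u - i) * w (τ - 1 - u) else 0 := by
  rw [← sum_filter, range_eq_Ico, Ico_filter_le_of_left_le (Nat.zero_le i),
    sum_Ico_eq_sum_range, state_eq_sum_range hx0 hw0 hdyn (N - i) _ (by omega)]
  refine sum_congr rfl fun s _ => ?_
  rw [Nat.add_sub_cancel_left]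
  congr 2
  push_cast
  ring

theorem filtered_state_eq_sum_range (c : ℕ → R) (m : ℕ) (hx0 : ∀ s : ℤ, s ≤ 0 → x s = 0)
    (hw0 : ∀ s : ℤ, s < 0 → w s = 0) (hdyn : ∀ t : ℤ, x (t + 1) = A * x t + w t)
    {N : ℕ} {τ : ℤ} (hτ : τ ≤ N) :
    ∑ i ∈ range (m + 1), c i • x (τ - i)
      = ∑ u ∈ range N, filteredImpulse c A m u * w (τ - 1 - u) := by
  simp_rw [shifted_state_eq_sum_range hx0 hw0 hdyn hτ, smul_sum]
  rw [sum_comm]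
  refine sum_congr rfl fun u _ => ?_
  have hrange : (range (m + 1)).filter (· ≤ u) = range (min u m + 1) := by
    ext i
    simp only [mem_filter, mem_range]
    omega
  rw [filteredImpulse, Matrix.sum_mul, ← hrange, sum_filter]
  refine sum_congr rfl fun i _ => ?_
  split_ifs <;> simp [Matrix.smul_mul]

end LinearSystem

theorem polynomial_filter_residual_decomposition_general
    (n p m : ℕ)
    (A : Matrix (Fin n) (Fin n) ℝ) (C : Matrix (Fin p) (Fin n) ℝ)
    (x w : ℤ → Matrix (Fin n) (Fin 1) ℝ) (y v : ℤ → Matrix (Fin p) (Fin 1) ℝ)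
    (hx0 : ∀ s : ℤ, s ≤ 0 → x s = 0)
    (hw0 : ∀ s : ℤ, s < 0 → w s = 0)
    (hdyn : ∀ t : ℤ, x (t + 1) = A * x t + w t)
    (hout : ∀ t : ℤ, y t = C * x t + v t)
    (c : ℕ → ℝ)
    (t : ℕ) :
    ∑ i ∈ Finset.range (m + 1), c i • y ((t : ℤ) - (i : ℤ))
      = ∑ i ∈ Finset.range (m + 1), c i • v ((t : ℤ) - (i : ℤ))
        + C * (∑ s ∈ Finset.range m,
            (∑ i ∈ Finset.range (s + 1), c i • A ^ (s - i)) * w ((t : ℤ) - 1 - (s : ℤ)))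
        + C * (∑ s ∈ Finset.range (t - m),
            (∑ i ∈ Finset.range (m + 1), c i • A ^ (m - i)) * A ^ s
              * w ((t : ℤ) - (m : ℤ) - 1 - (s : ℤ))) := by
  have houtput : ∑ i ∈ range (m + 1), c i • y (t - i)
      = ∑ i ∈ range (m + 1), c i • v (t - i) + C * ∑ i ∈ range (m + 1), c i • x (t - i) := by
    simp only [hout, smul_add, Matrix.mul_smul, sum_add_distrib, Matrix.mul_sum, add_comm]
  have hshort : ∑ u ∈ range m, filteredImpulse c A m u * w (t - 1 - u)
      = ∑ u ∈ range m, (∑ i ∈ range (u + 1), c i • A ^ (u - i)) * w (t - 1 - u) :=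
    sum_congr rfl fun u hu => by rw [filteredImpulse_of_lt c A (mem_range.mp hu)]
  have hlong : ∑ s ∈ range t, filteredImpulse c A m (m + s) * w (t - 1 - (m + s : ℕ))
      = ∑ s ∈ range (t - m), (∑ i ∈ range (m + 1), c i • A ^ (m - i)) * A ^ s
          * w (t - m - 1 - s) := by
    calc _ = ∑ s ∈ range t, (∑ i ∈ range (m + 1), c i • A ^ (m - i)) * A ^ s
          * w (t - m - 1 - s) := by
          refine sum_congr rfl fun s _ => ?_
          rw [filteredImpulse_add]
          congr 2
          push_cast
          ring
      _ = _ := by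
          refine (sum_subset (range_subset_range.mpr (Nat.sub_le t m)) fun s _ hs => ?_).symm
          rw [hw0 _ (by simp only [mem_range, not_lt] at hs; omega), Matrix.mul_zero]
  -- `N = m + t` splits as `m + t` whether or not `t < m`; the surplus terms have `w` at negative times.
  rw [houtput, filtered_state_eq_sum_range c m hx0 hw0 hdyn (N := m + t) (by omega),
    sum_range_add (fun u => filteredImpulse c A m u * w (t - 1 - u)), hshort, hlong,
    Matrix.mul_add, add_assoc]

/-- exact residual decomposition for polynomial-filter hints.
With `c_0 = 1`, hint `ỹ_t = −∑_{i=1}^m c_i y_{t-i}`, and residual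
`Δ_t = ∑_{i=0}^m c_i y_{t-i}`, for all `t ≥ 1`,
`Δ_t = ∑_{i=0}^m c_i v_{t-i} + C ∑_{s=0}^{m-1} (∑_{i=0}^s c_i A^{s-i}) w_{t-1-s}
     + C ∑_{s=0}^{t-m-1} q(A) A^s w_{t-m-1-s}`, where `q(A) = ∑_{i=0}^m c_i A^{m-i}`.
Sequences are indexed by `ℤ` with the conventions `x_s = 0` for `s ≤ 0`,
`w_s = 0` for `s < 0` and `v_s = 0` (hence `y_s = 0`) for `s ≤ 0`. -/
theorem polynomial_filter_residual_decomposition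
    (n p m : ℕ)
    (A : Matrix (Fin n) (Fin n) ℝ) (C : Matrix (Fin p) (Fin n) ℝ)
    (x w : ℤ → Matrix (Fin n) (Fin 1) ℝ) (y v : ℤ → Matrix (Fin p) (Fin 1) ℝ)
    (hx0 : ∀ s : ℤ, s ≤ 0 → x s = 0)
    (hw0 : ∀ s : ℤ, s < 0 → w s = 0)
    (hv0 : ∀ s : ℤ, s ≤ 0 → v s = 0)
    (hdyn : ∀ t : ℤ, x (t + 1) = A * x t + w t)
    (hout : ∀ t : ℤ, y t = C * x t + v t)
    (c : ℕ → ℝ) (hc0 : c 0 = 1)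
    (t : ℕ) (ht : 1 ≤ t) :
    ∑ i ∈ Finset.range (m + 1), c i • y ((t : ℤ) - (i : ℤ))
      = ∑ i ∈ Finset.range (m + 1), c i • v ((t : ℤ) - (i : ℤ))
        + C * (∑ s ∈ Finset.range m,
            (∑ i ∈ Finset.range (s + 1), c i • A ^ (s - i)) * w ((t : ℤ) - 1 - (s : ℤ)))
        + C * (∑ s ∈ Finset.range (t - m),
            (∑ i ∈ Finset.range (m + 1), c i • A ^ (m - i)) * A ^ s
              * w ((t : ℤ) - (m : ℤ) - 1 - (s : ℤ))) :=
  polynomial_filter_residual_decomposition_general n p m A C x w y v hx0 hw0 hdyn hout c t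
end

section
/- Let A ∈ ℝ^{n×n} satisfy A = S J S⁻¹ where J is block diagonal with Jordan blocks of size at most r, all eigenvalues of A are real and contained in [−1, 1], and set κ_A := ‖S‖ ‖S⁻¹‖. Then the filtered series satisfies ∑_{s=0}^∞ ‖(A² − I)^r A^s‖ ≤ r (2e²)^r n κ_A, where ‖·‖ is the operator norm; in particular the bound is independent of the spectral gap of A. -/
/-- `A = S J S⁻¹` over `ℝ`, where `J` is block diagonal with Jordan blocks of size at
most `r` whose (real) eigenvalues lie in `[−1, 1]`, and `κA = ‖S‖ ‖S⁻¹‖`. -/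
def HasRealJordanForm (n r : ℕ) (A : Matrix (Fin n) (Fin n) ℝ) (κA : ℝ) : Prop :=
  ∃ (b : ℕ) (msize : Fin b → ℕ) (lam : Fin b → ℝ)
    (S : Matrix (Fin n) ((i : Fin b) × Fin (msize i)) ℝ)
    (S' : Matrix ((i : Fin b) × Fin (msize i)) (Fin n) ℝ),
      (∀ i, msize i ≤ r) ∧ (∀ i, lam i ∈ Set.Icc (-1 : ℝ) 1) ∧
      S * S' = 1 ∧ S' * S = 1 ∧
      A = S * Matrix.blockDiagonal' (fun i => jordanBlock ℝ (lam i) (msize i)) * S' ∧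
      κA = opNorm S * opNorm S'

/-!
Conjugating by `S` reduces the bound to the Jordan form, and `‖S E S'‖ ≤ ‖S‖ ‖S'‖ ∑ |E p q|`,
so it suffices to bound each entry series `∑ₛ |((J² - 1)^r J^s) u v|` of a Jordan block
`J = λ + N`. That entry is the coefficient of `X^(v-u)` in `((X + λ)² - 1)^r (X + λ)^s`, and
`v - u < r`. In `(X + λ)² - 1 = (X + λ - 1)(X + λ + 1)` one of `|λ ∓ 1|` equals `1 - |λ|` and
the other is at most `2`, so the `j`-th coefficient of the first factor is at most
`2^r C(2r, j) (1 - |λ|)^(r - j)`. For `j + c = v - u` this power of `1 - |λ|` exceeds `c`, which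
exactly compensates the negative-binomial series `∑ₛ C(s, c) |λ|^(s - c) = (1 - |λ|)^(-c-1)`;
this is why the bound does not depend on the spectral gap. Each entry series is therefore at most
`2^r ∑ⱼ C(2r, j) ≤ 8^r ≤ (2e²)^r`, and each row of the Jordan form has at most `r` nonzero
entries.
-/

open scoped Matrix.Norms.L2Operator
open Polynomial Finset

namespace Matrix

section L2OpNorm

variable {𝕜 : Type*} [RCLike 𝕜] {m n : Type*} [Fintype m] [Fintype n]

theorem l2_opNorm_single [DecidableEq m] [DecidableEq n] (i : m) (j : n) (c : 𝕜) :
    ‖single i j c‖ = ‖c‖ := by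
  have h := l2_opNorm_conjTranspose_mul_self (single i j c)
  rw [conjTranspose_single, single_mul_single_same, ← diagonal_single, l2_opNorm_diagonal,
    Pi.norm_single, norm_mul, norm_star, ← sq, ← sq] at h
  exact (sq_eq_sq₀ (norm_nonneg _) (norm_nonneg _)).1 h.symm

theorem l2_opNorm_le_sum_norm_apply [DecidableEq m] [DecidableEq n] (A : Matrix m n 𝕜) :
    ‖A‖ ≤ ∑ i, ∑ j, ‖A i j‖ := by
  conv_lhs => rw [matrix_eq_sum_single A]
  refine (norm_sum_le _ _).trans (sum_le_sum fun i _ => (norm_sum_le _ _).trans_eq ?_)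
  simp only [l2_opNorm_single]

theorem l2_opNorm_mul_mul_le_s18 {l o : Type*} [Fintype l] [Fintype o] [DecidableEq n] [DecidableEq l]
    [DecidableEq o]
    (S : Matrix m n 𝕜) (E : Matrix n l 𝕜) (S' : Matrix l o 𝕜) :
    ‖S * E * S'‖ ≤ ‖S‖ * ‖S'‖ * ∑ i, ∑ j, ‖E i j‖ :=
  calc ‖S * E * S'‖ ≤ ‖S‖ * ‖E‖ * ‖S'‖ :=
        (l2_opNorm_mul _ _).trans (by gcongr; exact l2_opNorm_mul _ _)
    _ ≤ ‖S‖ * (∑ i, ∑ j, ‖E i j‖) * ‖S'‖ := by gcongr; exact l2_opNorm_le_sum_norm_apply E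
    _ = ‖S‖ * ‖S'‖ * ∑ i, ∑ j, ‖E i j‖ := by ring

end L2OpNorm

@[simps]
def conjRingHom {R : Type*} [Semiring R] {m σ : Type*} [Fintype m] [DecidableEq m] [Fintype σ]
    [DecidableEq σ] (S : Matrix m σ R) (S' : Matrix σ m R) (hSS' : S * S' = 1)
    (hS'S : S' * S = 1) : Matrix σ σ R →+* Matrix m m R where
  toFun M := S * M * S'
  map_one' := by rw [Matrix.mul_one, hSS']
  map_mul' M M' := by
    rw [Matrix.mul_assoc S M', ← Matrix.mul_assoc _ S, Matrix.mul_assoc _ S' S, hS'S,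
      Matrix.mul_one, Matrix.mul_assoc, Matrix.mul_assoc, Matrix.mul_assoc]
  map_zero' := by rw [Matrix.mul_zero, Matrix.zero_mul]
  map_add' M M' := by rw [Matrix.mul_add, Matrix.add_mul]

end Matrix

section JordanBlock

variable {K : Type*}

theorem shiftMatrix_pow_apply [Ring K] (m k : ℕ) (u v : Fin m) :
    (shiftMatrix K m ^ k) u v = if (u : ℕ) + k = v then 1 else 0 := by
  induction k generalizing u with
  | zero => simp [Matrix.one_apply, Fin.ext_iff]
  | succ k ih =>
    rw [pow_succ', Matrix.mul_apply]
    simp only [ih]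
    simp only [shiftMatrix, Matrix.of_apply, ite_zero_mul_ite_zero, one_mul]
    by_cases h : (u : ℕ) + (k + 1) = v
    · rw [if_pos h, sum_eq_single ⟨u + 1, by omega⟩] <;> simp [Fin.ext_iff] <;> omega
    · rw [if_neg h]
      exact sum_eq_zero fun x _ => if_neg (by omega)

theorem aeval_shiftMatrix_apply [CommRing K] {m : ℕ} (p : K[X]) (u v : Fin m) :
    aeval (shiftMatrix K m) p u v = if (u : ℕ) ≤ v then p.coeff ((v : ℕ) - u) else 0 := by
  induction p using Polynomial.induction_on' with
  | add p q hp hq =>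
    simp only [map_add, Matrix.add_apply, hp, hq, coeff_add]
    split_ifs <;> simp
  | monomial k a =>
    simp only [aeval_monomial, ← Algebra.smul_def, Matrix.smul_apply, shiftMatrix_pow_apply,
      coeff_monomial, smul_eq_mul, mul_ite, mul_one, mul_zero]
    split_ifs <;> first | rfl | omega

theorem jordanBlock_eq_aeval [CommRing K] (x : K) (m : ℕ) :
    jordanBlock K x m = aeval (shiftMatrix K m) (X + C x) := by
  rw [map_add, aeval_X, aeval_C, Algebra.algebraMap_eq_smul_one, add_comm]
  rfl

theorem filtered_jordanBlock_apply [CommRing K] (x : K) (m r s : ℕ) (u v : Fin m) :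
    ((jordanBlock K x m ^ 2 - 1) ^ r * jordanBlock K x m ^ s : Matrix (Fin m) (Fin m) K) u v =
      if (u : ℕ) ≤ v then (((X + C x) ^ 2 - 1) ^ r * (X + C x) ^ s).coeff ((v : ℕ) - u)
      else 0 := by
  simp only [jordanBlock_eq_aeval, ← aeval_shiftMatrix_apply, map_mul, map_pow, map_sub, map_one]

end JordanBlock

theorem pow_mul_pow_le_two_pow_mul_pow {d e : ℝ} (hd₀ : 0 ≤ d) (hd₁ : d ≤ 1) (he₀ : 0 ≤ e)
    (he₂ : e ≤ 2) (r a b : ℕ) : d ^ (r - a) * e ^ (r - b) ≤ 2 ^ r * d ^ (r - (a + b)) := by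
  have he : e ^ (r - b) ≤ 2 ^ r :=
    calc e ^ (r - b) ≤ 2 ^ (r - b) := by gcongr
      _ ≤ 2 ^ r := pow_le_pow_right₀ one_le_two (Nat.sub_le r b)
  rw [mul_comm (2 ^ r)]
  exact mul_le_mul (pow_le_pow_of_le_one hd₀ hd₁ (by omega)) he (by positivity) (by positivity)

theorem abs_sub_one_pow_mul_abs_add_one_pow_le {x : ℝ} (hx : |x| ≤ 1) (r a b : ℕ) :
    |x - 1| ^ (r - a) * |x + 1| ^ (r - b) ≤ 2 ^ r * (1 - |x|) ^ (r - (a + b)) := by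
  obtain ⟨hx₁, hx₂⟩ := abs_le.1 hx
  rcases le_or_gt 0 x with h | h
  · rw [abs_of_nonpos (by linarith : x - 1 ≤ 0), abs_of_nonneg (by linarith : 0 ≤ x + 1),
      abs_of_nonneg h, neg_sub]
    exact pow_mul_pow_le_two_pow_mul_pow (by linarith) (by linarith) (by linarith) (by linarith) ..
  · rw [abs_of_neg (by linarith : x - 1 < 0), abs_of_nonneg (by linarith : 0 ≤ x + 1),
      abs_of_neg h, mul_comm, add_comm a, sub_neg_eq_add, add_comm 1 x]
    exact pow_mul_pow_le_two_pow_mul_pow (by linarith) (by linarith) (by linarith) (by linarith) ..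

theorem abs_coeff_sq_sub_one_pow_le {x : ℝ} (hx : |x| ≤ 1) (r j : ℕ) :
    |(((X + C x) ^ 2 - 1) ^ r).coeff j| ≤ 2 ^ r * (2 * r).choose j * (1 - |x|) ^ (r - j) := by
  have hfactor : ((X + C x) ^ 2 - 1 : ℝ[X]) ^ r = (X + C (x - 1)) ^ r * (X + C (x + 1)) ^ r := by
    rw [← mul_pow, C_sub, C_add, C_1]
    ring
  rw [hfactor, coeff_mul, two_mul, Nat.add_choose_eq, Nat.cast_sum, mul_sum, sum_mul]
  refine (abs_sum_le_sum_abs _ _).trans (sum_le_sum fun ab hab => ?_)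
  rw [HasAntidiagonal.mem_antidiagonal] at hab
  rw [coeff_X_add_C_pow, coeff_X_add_C_pow, ← hab]
  calc _ = (r.choose ab.1 * r.choose ab.2 : ℝ) * (|x - 1| ^ (r - ab.1) * |x + 1| ^ (r - ab.2)) := by
        simp only [abs_mul, abs_pow, Nat.abs_cast]
        ring
    _ ≤ (r.choose ab.1 * r.choose ab.2 : ℝ) * (2 ^ r * (1 - |x|) ^ (r - (ab.1 + ab.2))) :=
        mul_le_mul_of_nonneg_left (abs_sub_one_pow_mul_abs_add_one_pow_le hx r ab.1 ab.2)
          (by positivity)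
    _ = _ := by push_cast; ring

theorem hasSum_negBinomial {x : ℝ} (hx₀ : 0 ≤ x) (hx₁ : x < 1) (c : ℕ) :
    HasSum (fun s : ℕ => (1 - x) ^ (c + 1) * s.choose c * x ^ (s - c)) 1 := by
  have hgeom := (hasSum_choose_mul_geometric_of_norm_lt_one c
    (by rwa [Real.norm_eq_abs, abs_of_nonneg hx₀])).mul_left ((1 - x) ^ (c + 1))
  rw [← hasSum_nat_add_iff' c]
  have hlow : ∑ s ∈ range c, (1 - x) ^ (c + 1) * (s.choose c : ℝ) * x ^ (s - c) = 0 :=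
    sum_eq_zero fun s hs => by simp [Nat.choose_eq_zero_of_lt (mem_range.1 hs)]
  rw [hlow, sub_zero]
  rw [mul_one_div_cancel (pow_ne_zero _ (sub_ne_zero.2 hx₁.ne'))] at hgeom
  simpa only [Nat.add_sub_cancel, mul_assoc] using hgeom

theorem sum_range_negBinomial_le_one {x : ℝ} (hx₀ : 0 ≤ x) (hx₁ : x ≤ 1) (c N : ℕ) :
    ∑ s ∈ range N, (1 - x) ^ (c + 1) * s.choose c * x ^ (s - c) ≤ 1 := by
  rcases hx₁.lt_or_eq with hx₁ | rfl
  · exact sum_le_hasSum _ (fun s _ => by positivity) (hasSum_negBinomial hx₀ hx₁ c)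
  · simp

theorem sum_range_abs_coeff_filtered_le {x : ℝ} (hx : |x| ≤ 1) {r k : ℕ} (hk : k < r) (N : ℕ) :
    ∑ s ∈ range N, |(((X + C x) ^ 2 - 1) ^ r * (X + C x) ^ s).coeff k| ≤ 8 ^ r := by
  set w : ℕ → ℝ := fun j => 2 ^ r * (2 * r).choose j
  set g : ℕ → ℕ → ℝ := fun c s => (1 - |x|) ^ (c + 1) * s.choose c * |x| ^ (s - c)
  have hδ : 0 ≤ 1 - |x| := sub_nonneg.2 hx
  have hpoint : ∀ s, |(((X + C x) ^ 2 - 1) ^ r * (X + C x) ^ s).coeff k| ≤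
      ∑ jc ∈ antidiagonal k, w jc.1 * g jc.2 s := by
    intro s
    rw [coeff_mul]
    refine (abs_sum_le_sum_abs _ _).trans (sum_le_sum fun jc hjc => ?_)
    rw [HasAntidiagonal.mem_antidiagonal] at hjc
    rw [abs_mul, coeff_X_add_C_pow, abs_mul, abs_pow, Nat.abs_cast]
    calc _ ≤ w jc.1 * (1 - |x|) ^ (r - jc.1) * (|x| ^ (s - jc.2) * s.choose jc.2) :=
          mul_le_mul_of_nonneg_right (abs_coeff_sq_sub_one_pow_le hx r jc.1) (by positivity)
      _ ≤ w jc.1 * (1 - |x|) ^ (jc.2 + 1) * (|x| ^ (s - jc.2) * s.choose jc.2) := by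
          refine mul_le_mul_of_nonneg_right (mul_le_mul_of_nonneg_left ?_ (by positivity))
            (by positivity)
          exact pow_le_pow_of_le_one hδ (by linarith [abs_nonneg x]) (by omega)
      _ = w jc.1 * g jc.2 s := by ring
  have hw : ∑ jc ∈ antidiagonal k, w jc.1 ≤ 8 ^ r := by
    have hchoose : ∑ j ∈ range (k + 1), (2 * r).choose j ≤ 2 ^ (2 * r) :=
      (sum_le_sum_of_subset (range_subset_range.2 (by omega))).trans_eq (Nat.sum_range_choose _)
    rw [Nat.sum_antidiagonal_eq_sum_range_succ_mk, ← mul_sum, ← Nat.cast_sum,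
      show (8 : ℝ) ^ r = 2 ^ r * 2 ^ (2 * r) by rw [pow_mul, ← mul_pow]; norm_num]
    gcongr
    exact_mod_cast hchoose
  calc ∑ s ∈ range N, |(((X + C x) ^ 2 - 1) ^ r * (X + C x) ^ s).coeff k|
      ≤ ∑ s ∈ range N, ∑ jc ∈ antidiagonal k, w jc.1 * g jc.2 s := sum_le_sum fun s _ => hpoint s
    _ = ∑ jc ∈ antidiagonal k, w jc.1 * ∑ s ∈ range N, g jc.2 s := by
        rw [sum_comm]
        simp only [mul_sum]
    _ ≤ ∑ jc ∈ antidiagonal k, w jc.1 :=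
        sum_le_sum fun jc _ => mul_le_of_le_one_right (by positivity)
          (sum_range_negBinomial_le_one (abs_nonneg x) hx jc.2 N)
    _ ≤ 8 ^ r := hw

theorem sum_range_abs_filtered_jordanBlock_apply_le {x : ℝ} (hx : |x| ≤ 1) {m r : ℕ}
    (hm : m ≤ r) (u v : Fin m) (N : ℕ) :
    ∑ s ∈ range N, |((jordanBlock ℝ x m ^ 2 - 1) ^ r * jordanBlock ℝ x m ^ s :
      Matrix (Fin m) (Fin m) ℝ) u v| ≤ 8 ^ r := by
  by_cases huv : (u : ℕ) ≤ v
  · simp only [filtered_jordanBlock_apply, if_pos huv]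
    exact sum_range_abs_coeff_filtered_le hx (by omega) N
  · simp [filtered_jordanBlock_apply, huv]

theorem sum_range_sum_abs_blockDiagonal'_le {o : Type*} [Fintype o] [DecidableEq o]
    {d : o → Type*} [∀ i, Fintype (d i)] [∀ i, DecidableEq (d i)] {r : ℕ}
    (hd : ∀ i, Fintype.card (d i) ≤ r) {B : ℝ} (hB : 0 ≤ B)
    (M : ℕ → ∀ i, Matrix (d i) (d i) ℝ) (hM : ∀ i u v N, ∑ s ∈ range N, |M s i u v| ≤ B)
    (N : ℕ) :
    ∑ s ∈ range N, ∑ p, ∑ q, |Matrix.blockDiagonal' (M s) p q| ≤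
      r * B * Fintype.card (Σ i, d i) := by
  have hrow : ∀ p : Σ i, d i, ∑ q, ∑ s ∈ range N, |Matrix.blockDiagonal' (M s) p q| ≤ r * B := by
    rintro ⟨i, u⟩
    rw [← univ_sigma_univ, sum_sigma, sum_eq_single i]
    · calc ∑ v, ∑ s ∈ range N, |Matrix.blockDiagonal' (M s) ⟨i, u⟩ ⟨i, v⟩|
          ≤ ∑ _v : d i, B :=
            sum_le_sum fun v _ => by simpa only [Matrix.blockDiagonal'_apply_eq] using hM i u v N
        _ ≤ r * B := by
            rw [sum_const, card_univ, nsmul_eq_mul]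
            gcongr
            exact_mod_cast hd i
    · intro i' _ hi'
      exact sum_eq_zero fun v _ => sum_eq_zero fun s _ => by
        rw [Matrix.blockDiagonal'_apply_ne _ _ _ hi'.symm, abs_zero]
    · simp
  calc ∑ s ∈ range N, ∑ p, ∑ q, |Matrix.blockDiagonal' (M s) p q|
      = ∑ p, ∑ q, ∑ s ∈ range N, |Matrix.blockDiagonal' (M s) p q| := by
        rw [sum_comm]
        exact sum_congr rfl fun p _ => sum_comm
    _ ≤ ∑ _p : Σ i, d i, r * B := sum_le_sum fun p _ => hrow p
    _ = r * B * Fintype.card (Σ i, d i) := by rw [sum_const, card_univ, nsmul_eq_mul, mul_comm]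

theorem eight_le_two_mul_exp_two : (8 : ℝ) ≤ 2 * Real.exp 2 := by
  have he : Real.exp 2 = Real.exp 1 * Real.exp 1 := by rw [← Real.exp_add]; norm_num
  nlinarith [Real.add_one_le_exp 1]

/-- gap-free filtered Jordan bound.  If `A` has a real Jordan form with
blocks of size at most `r` and real eigenvalues in `[−1,1]`, then
`∑_{s=0}^∞ ‖(A² − I)^r A^s‖ ≤ r (2e²)^r n κ_A`, independently of any spectral gap. -/
theorem gap_free_filtered_jordan_bound
    (n r : ℕ) (A : Matrix (Fin n) (Fin n) ℝ) (κA : ℝ)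
    (hA : HasRealJordanForm n r A κA) :
    Summable (fun s : ℕ => opNorm ((A ^ 2 - 1) ^ r * A ^ s)) ∧
    (∑' s : ℕ, opNorm ((A ^ 2 - 1) ^ r * A ^ s))
      ≤ (r : ℝ) * (2 * Real.exp 2) ^ r * n * κA := by
  obtain ⟨b, msize, lam, S, S', hsize, hlam, hSS', hS'S, hAJ, rfl⟩ := hA
  set Jb := fun i => jordanBlock ℝ (lam i) (msize i)
  set E := fun s : ℕ => Matrix.blockDiagonal' ((Jb ^ 2 - 1) ^ r * Jb ^ s)
  let φ := (Matrix.conjRingHom S S' hSS' hS'S).comp (Matrix.blockDiagonal'RingHom _ ℝ)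
  have hconj : ∀ s, (A ^ 2 - 1) ^ r * A ^ s = S * E s * S' := fun s => by
    have h := map_mul φ ((Jb ^ 2 - 1) ^ r) (Jb ^ s)
    simp only [map_pow, map_sub, map_one] at h
    rw [show A = φ Jb from hAJ]
    exact h.symm
  have hE : ∀ N, ∑ s ∈ range N, ∑ p, ∑ q, |E s p q| ≤ r * 8 ^ r * n := fun N => by
    rw [← Fintype.card_fin n, ← Matrix.square_of_invertible S' S hS'S hSS']
    exact sum_range_sum_abs_blockDiagonal'_le (fun i => (Fintype.card_fin _).trans_le (hsize i))
      (by positivity) _ (fun i u v N =>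
        sum_range_abs_filtered_jordanBlock_apply_le (abs_le.2 (hlam i)) (hsize i) u v N) N
  have hpartial : ∀ N, ∑ s ∈ range N, opNorm ((A ^ 2 - 1) ^ r * A ^ s) ≤
      r * (2 * Real.exp 2) ^ r * n * (‖S‖ * ‖S'‖) := fun N => calc
    ∑ s ∈ range N, opNorm ((A ^ 2 - 1) ^ r * A ^ s)
      ≤ ‖S‖ * ‖S'‖ * ∑ s ∈ range N, ∑ p, ∑ q, |E s p q| := by
        rw [mul_sum]
        exact sum_le_sum fun s _ => hconj s ▸ Matrix.l2_opNorm_mul_mul_le_s18 S (E s) S'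
    _ ≤ r * (2 * Real.exp 2) ^ r * n * (‖S‖ * ‖S'‖) := by
        rw [mul_comm]
        gcongr
        exact (hE N).trans (by gcongr; exact eight_le_two_mul_exp_two)
  exact ⟨summable_of_sum_range_le (fun _ => norm_nonneg _) hpartial,
    Real.tsum_le_of_sum_range_le (fun _ => norm_nonneg _) hpartial⟩
end
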